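/- arXiv:2512.10364 — 3 statements merged into one kernel-verified Lean document; each statement's English description precedes it below -/
import Mathlib

section
/- Let X be an abstract simplicial complex on a finite vertex set V of size n whose p-skeleton is complete (every subset of V of cardinality at most p+1 is a face of X), and let ω be a vertex weight function on X. Then for every −1 ≤ k ≤ p−1, the multiset of eigenvalues of L_k^ω(X) consists of the single value Σ_{v∈V} ω(v) with multiplicity C(n, k+1). Moreover, if k = p = dim(X), then the multiset of eigenvalues of L_k^ω(X) consists of Σ_{v∈V} ω(v) with multiplicity C(n−1, k) and 0 with multiplicity C(n−1, k+1). -/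
open Finset

/-- An abstract simplicial complex on the vertex type `V`: a collection of finite subsets of `V`
closed under taking subsets and containing the empty set. -/
structure AbstractSC (V : Type*) where
  faces : Finset (Finset V)
  empty_mem : ∅ ∈ faces
  down_closed : ∀ ⦃σ τ : Finset V⦄, σ ∈ faces → τ ⊆ σ → τ ∈ faces

variable {V : Type*} [Fintype V] [LinearOrder V]

namespace AbstractSC

/-- The link of a face `σ`: the vertices `v ∉ σ` with `σ ∪ {v}` a face. -/
def link (X : AbstractSC V) (σ : Finset V) : Finset V :=
  univ.filter fun v => v ∉ σ ∧ insert v σ ∈ X.faces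

/-- The dimension of the complex (as an integer, so that `dim {∅} = -1`). -/
def dimension (X : AbstractSC V) : ℤ :=
  ((X.faces.sup Finset.card : ℕ) : ℤ) - 1

/-- The faces of cardinality `s`, i.e. the `(s-1)`-simplices. -/
def facesOfCard (X : AbstractSC V) (s : ℕ) : Finset (Finset V) :=
  X.faces.filter fun σ => σ.card = s

/-- The type of faces of cardinality `s` (the `(s-1)`-simplices). -/
abbrev Face (X : AbstractSC V) (s : ℕ) := {σ : Finset V // σ ∈ X.faces ∧ σ.card = s}

/-- `h(X)`: the maximal dimension of a missing face (a non-face all of whose proper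
subsets are faces), as an integer. -/
def hdim (X : AbstractSC V) : ℤ :=
  (((univ.powerset.filter fun σ : Finset V =>
      σ ∉ X.faces ∧ ∀ τ : Finset V, τ ⊂ σ → τ ∈ X.faces).sup Finset.card : ℕ) : ℤ) - 1

end AbstractSC

/-- The sign `(-1)^{ε(σ,τ)}`, where `ε(σ,τ)` is the number of elements of `σ ∩ τ` lying
strictly between the unique element of `σ \ τ` and the unique element of `τ \ σ`. -/
def epsSign (σ τ : Finset V) : ℝ :=
  if h : (σ \ τ).Nonempty ∧ (τ \ σ).Nonempty then
    (-1 : ℝ) ^ ((σ ∩ τ).filter fun w =>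
        min ((σ \ τ).min' h.1) ((τ \ σ).min' h.2) < w ∧
          w < max ((σ \ τ).min' h.1) ((τ \ σ).min' h.2)).card
  else 1

/-- The vertex-weighted `(s-1)`-dimensional Laplacian `L_{s-1}^ω(X)`, as a matrix indexed by
the faces of cardinality `s`. -/
noncomputable def lapFull (X : AbstractSC V) (ω : V → ℝ) (s : ℕ) :
    Matrix (X.Face s) (X.Face s) ℝ := fun σ τ =>
  if σ = τ then (∑ v ∈ X.link σ.1, ω v) + ∑ v ∈ σ.1, ω v
  else if (σ.1 ∩ τ.1).card + 1 = s ∧ σ.1 ∪ τ.1 ∉ X.faces then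
    epsSign σ.1 τ.1 * ∏ v ∈ τ.1 \ σ.1, ω v
  else 0

/-- The vertex-weighted `k`-dimensional Laplacian, for an integer `k ≥ -1`. -/
noncomputable def lapZ (X : AbstractSC V) (ω : V → ℝ) (k : ℤ) :
    Matrix (X.Face (k + 1).toNat) (X.Face (k + 1).toNat) ℝ :=
  lapFull X ω (k + 1).toNat

/-- The vertex-weighted `(s-1)`-dimensional down-Laplacian `L_{s-1}^{ω,down}(X)`. -/
noncomputable def lapDown (X : AbstractSC V) (ω : V → ℝ) (s : ℕ) :
    Matrix (X.Face s) (X.Face s) ℝ := fun σ τ =>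
  if σ = τ then ∑ v ∈ σ.1, ω v
  else if (σ.1 ∩ τ.1).card + 1 = s then epsSign σ.1 τ.1 * ∏ v ∈ τ.1 \ σ.1, ω v
  else 0

/-- The vertex-weighted `(s-1)`-dimensional up-Laplacian of a collection `F` of faces,
as a matrix indexed by all `s`-element subsets of `V`. -/
noncomputable def lapUpF (F : Finset (Finset V)) (ω : V → ℝ) (s : ℕ) :
    Matrix {σ : Finset V // σ.card = s} {σ : Finset V // σ.card = s} ℝ := fun σ τ =>
  if σ = τ then
    (if σ.1 ∈ F then ∑ u ∈ univ.filter (fun v => v ∉ σ.1 ∧ insert v σ.1 ∈ F), ω u else 0)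
  else if (σ.1 ∩ τ.1).card + 1 = s ∧ σ.1 ∪ τ.1 ∈ F then
    -(epsSign σ.1 τ.1 * ∏ v ∈ τ.1 \ σ.1, ω v)
  else 0

/-- The faces of the complex `X_{s-1}^c`, generated by the `s`-element subsets of `V`
that are not faces of `X`. -/
def complFaces (X : AbstractSC V) (s : ℕ) : Finset (Finset V) :=
  univ.powerset.filter fun τ => ∃ σ : Finset V, σ.card = s ∧ σ ∉ X.faces ∧ τ ⊆ σ

/-- The faces of the `(s-1)`-skeleton of the complete simplicial complex on `V`:
all subsets of cardinality at most `s`. -/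
def skeletonFaces (V : Type*) [Fintype V] [DecidableEq V] (s : ℕ) : Finset (Finset V) :=
  univ.powerset.filter fun σ : Finset V => σ.card ≤ s

/-- The vertex-weighted Laplacian `L^ω(G_X)` of the underlying graph of `X`. -/
noncomputable def graphLap (X : AbstractSC V) (ω : V → ℝ) : Matrix V V ℝ := fun u v =>
  if u = v then ∑ w ∈ univ.filter (fun w => w ≠ u ∧ ({u, w} : Finset V) ∈ X.faces), ω w
  else if ({u, v} : Finset V) ∈ X.faces then -ω v
  else 0

/-- The matrix `J^ω`, with `(u,v)` entry `ω v`. -/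
noncomputable def Jmat (ω : V → ℝ) : Matrix V V ℝ := fun _ v => ω v

/-- `N_σ(u)`: the codimension-one faces `η` of `σ` with `η ∪ {u} ∈ X`. -/
def Nset (X : AbstractSC V) (σ : Finset V) (u : V) : Finset (Finset V) :=
  (σ.powersetCard (σ.card - 1)).filter fun η => insert u η ∈ X.faces

/-- `σ[j]`: the vertices `u` lying in the link of every vertex of `σ` but not in the link of
`σ`, with `|N_σ(u)| = j`. -/
def bracket (X : AbstractSC V) (σ : Finset V) (j : ℕ) : Finset V :=
  univ.filter fun u =>
    (∀ v ∈ σ, u ≠ v ∧ ({v, u} : Finset V) ∈ X.faces) ∧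
      insert u σ ∉ X.faces ∧ (Nset X σ u).card = j

/-- The multiset of eigenvalues (with multiplicity) of a real square matrix:
the roots of its characteristic polynomial. -/
noncomputable def spec {m : Type*} [Fintype m] [DecidableEq m] (M : Matrix m m ℝ) :
    Multiset ℝ :=
  M.charpoly.roots

/-- The `i`-th smallest eigenvalue (1-indexed, with multiplicity). -/
noncomputable def eigAsc {m : Type*} [Fintype m] [DecidableEq m] (M : Matrix m m ℝ)
    (i : ℕ) : ℝ :=
  ((spec M).sort (· ≤ ·)).getD (i - 1) 0

/-- The `i`-th largest eigenvalue (1-indexed, with multiplicity). -/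
noncomputable def eigDesc {m : Type*} [Fintype m] [DecidableEq m] (M : Matrix m m ℝ)
    (i : ℕ) : ℝ :=
  ((spec M).sort (· ≤ ·)).getD ((spec M).card - i) 0

/-- `S^↑_{c,i}(M)`: the `i`-th smallest element (1-indexed) of the multiset of all sums of `c`
of the eigenvalues of `M` (over `c`-element subsets of the index set of the eigenvalues,
listed in increasing order). -/
noncomputable def sumsAsc {m : Type*} [Fintype m] [DecidableEq m] (M : Matrix m m ℝ)
    (c i : ℕ) : ℝ :=
  ((((Finset.range (spec M).card).powersetCard c).val.map
      fun J => ∑ j ∈ J, ((spec M).sort (· ≤ ·)).getD j 0).sort (· ≤ ·)).getD (i - 1) 0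

/-- Minimum of a real-valued function over a finite set (junk value `0` on `∅`). -/
noncomputable def minOver {α : Type*} (s : Finset α) (f : α → ℝ) : ℝ :=
  WithTop.untopD 0 ((s.image f).min)

/-- Maximum of a real-valued function over a finite set (junk value `0` on `∅`). -/
noncomputable def maxOver {α : Type*} (s : Finset α) (f : α → ℝ) : ℝ :=
  WithBot.unbotD 0 ((s.image f).max)

/-- The multiset of all sums `λ_0 + ⋯ + λ_{m-1}` over choices of one element `λ_j` from each
multiset `s j`, counted with multiplicity. -/
noncomputable def multisetSumChoices : (m : ℕ) → (Fin m → Multiset ℝ) → Multiset ℝ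
  | 0, _ => {0}
  | m + 1, s => (s 0).bind fun a => (multisetSumChoices m fun j => s j.succ).map (a + ·)

open Polynomial Matrix

section MatrixHelpers

variable {ι : Type*} [Fintype ι] [DecidableEq ι] {κ : Type*} [Fintype κ] [DecidableEq κ]

lemma eval_charpoly' (M : Matrix ι ι ℝ) (x : ℝ) :
    M.charpoly.eval x = (x • (1 : Matrix ι ι ℝ) - M).det := by
  rw [Matrix.charpoly, ← Polynomial.coe_evalRingHom, RingHom.map_det]
  congr 1
  ext i j
  by_cases h : i = j
  · subst h
    simp [charmatrix_apply_eq, Matrix.one_apply_eq]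
  · simp [charmatrix_apply_ne _ _ _ h, Matrix.one_apply_ne h]

lemma charpoly_smul_one' (c : ℝ) :
    (c • (1 : Matrix ι ι ℝ)).charpoly = (X - C c) ^ Fintype.card ι := by
  have h : charmatrix (c • (1 : Matrix ι ι ℝ)) = (X - C c) • (1 : Matrix ι ι ℝ[X]) := by
    ext i j
    by_cases h : i = j
    · subst h; simp
    · simp [charmatrix_apply_ne _ _ _ h, Matrix.one_apply_ne h]
  rw [Matrix.charpoly, h, Matrix.det_smul, det_one, mul_one, Fintype.card]

lemma det_smul_one_sub (x : ℝ) (hx : x ≠ 0) {n : Type*} [Fintype n] [DecidableEq n]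
    (M : Matrix n n ℝ) :
    (x • (1 : Matrix n n ℝ) - M).det = x ^ Fintype.card n * (1 + (-x⁻¹) • M).det := by
  have h1 : x • (1 : Matrix n n ℝ) - M = x • (1 + (-x⁻¹) • M) := by
    rw [smul_add, smul_smul]
    have : x * -x⁻¹ = -1 := by field_simp
    rw [this, neg_one_smul, ← sub_eq_add_neg]
  rw [h1, Matrix.det_smul, Fintype.card]

lemma charpoly_mul_comm_pow (A : Matrix ι κ ℝ) (B : Matrix κ ι ℝ) :
    X ^ Fintype.card κ * (A * B).charpoly = X ^ Fintype.card ι * (B * A).charpoly := by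
  apply Polynomial.eq_of_infinite_eval_eq
  apply Set.Infinite.mono (s := {x : ℝ | x ≠ 0})
  · intro x hx
    have hx' : (x : ℝ) ≠ 0 := hx
    simp only [Set.mem_setOf_eq, eval_mul, eval_pow, eval_X]
    rw [eval_charpoly', eval_charpoly', det_smul_one_sub x hx', det_smul_one_sub x hx']
    have h2 : (-x⁻¹) • (A * B) = A * ((-x⁻¹) • B) := (Matrix.mul_smul _ _ _).symm
    have h3 : (1 + A * ((-x⁻¹) • B)).det = (1 + ((-x⁻¹) • B) * A).det :=
      Matrix.det_one_add_mul_comm _ _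
    rw [h2, h3, Matrix.smul_mul]
    ring
  · have : {x : ℝ | x ≠ 0} = {(0:ℝ)}ᶜ := by ext; simp
    rw [this]
    exact Set.Finite.infinite_compl (Set.finite_singleton 0)

lemma charpoly_flip (M : Matrix ι ι ℝ) (c : ℝ) (a b : ℕ)
    (hab : a + b = Fintype.card ι)
    (h : M.charpoly = (X - C c) ^ a * X ^ b) :
    (c • (1 : Matrix ι ι ℝ) - M).charpoly = (X - C c) ^ b * X ^ a := by
  apply Polynomial.funext
  intro x
  rw [eval_charpoly']
  have h1 : x • (1 : Matrix ι ι ℝ) - (c • 1 - M) = -((c - x) • 1 - M) := by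
    rw [sub_smul]
    abel
  rw [h1, Matrix.det_neg, ← eval_charpoly', h]
  rw [← hab]
  simp only [eval_mul, eval_pow, eval_sub, eval_X, eval_C]
  ring_nf
  have e1 : (-1:ℝ) ^ (a*2) = 1 := by rw [mul_comm, pow_mul]; norm_num
  have e2 : (-1:ℝ) ^ b * (c - x)^b = (-c + x)^b := by rw [← mul_pow]; ring_nf
  rw [e1, mul_one, mul_assoc, e2]
end MatrixHelpers

set_option linter.unusedSectionVars false
set_option linter.unusedVariables false

section SignLemmas

variable {V : Type*} [Fintype V] [LinearOrder V]

/-- Sign of the boundary: `(-1)^{number of elements of η below the vertex removed from σ}`. -/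
def bsgn (σ η : Finset V) : ℝ :=
  if h : (σ \ η).Nonempty then
    (-1 : ℝ) ^ ((η.filter (· < (σ \ η).min' h)).card) else 1


lemma insert_sdiff_base (a : V) (η : Finset V) (ha : a ∉ η) : insert a η \ η = {a} := by
  ext x; simp only [mem_sdiff, mem_insert, mem_singleton]
  constructor
  · rintro ⟨h1 | h1, h2⟩ <;> tauto
  · rintro rfl; exact ⟨Or.inl rfl, ha⟩

lemma min'_eq_of_eq_singleton {s : Finset V} {a : V} (h : s = {a}) (hne : s.Nonempty) :
    s.min' hne = a := by
  apply le_antisymm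
  · exact Finset.min'_le s a (by rw [h]; exact mem_singleton_self a)
  · exact Finset.le_min' s hne a (fun y hy => by
      rw [h, mem_singleton] at hy; exact le_of_eq hy.symm)

lemma bsgn_insert (a : V) (η : Finset V) (ha : a ∉ η) :
    bsgn (insert a η) η = (-1 : ℝ) ^ ((η.filter (· < a)).card) := by
  have h1 : insert a η \ η = {a} := insert_sdiff_base a η ha
  rw [bsgn]
  have hne : (insert a η \ η).Nonempty := by rw [h1]; exact singleton_nonempty a
  rw [dif_pos hne]
  rw [min'_eq_of_eq_singleton h1 hne]

lemma epsSign_eq (σ τ : Finset V) (a b : V) (h1 : σ \ τ = {a}) (h2 : τ \ σ = {b}) :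
    epsSign σ τ
      = (-1 : ℝ) ^ (((σ ∩ τ).filter fun w => min a b < w ∧ w < max a b).card) := by
  have hne : (σ \ τ).Nonempty ∧ (τ \ σ).Nonempty := by
    rw [h1, h2]; exact ⟨singleton_nonempty a, singleton_nonempty b⟩
  rw [epsSign, dif_pos hne]
  rw [min'_eq_of_eq_singleton h1 hne.1, min'_eq_of_eq_singleton h2 hne.2]

lemma parity_core (η : Finset V) (a b : V) (ha : a ∉ η) (hab : a < b) :
    (η.filter (· < b)).card
      = (η.filter (· < a)).card + (η.filter fun w => a < w ∧ w < b).card := by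
  rw [← Finset.card_union_of_disjoint]
  · congr 1
    ext w
    simp only [mem_union, mem_filter]
    constructor
    · rintro ⟨hw, hwb⟩
      by_cases h : w < a
      · exact Or.inl ⟨hw, h⟩
      · refine Or.inr ⟨hw, ?_, hwb⟩
        rcases lt_or_eq_of_le (not_lt.mp h) with h' | h'
        · exact h'
        · exact absurd (h' ▸ hw) ha
    · rintro (⟨hw, h⟩ | ⟨hw, h, h'⟩)
      · exact ⟨hw, h.trans hab⟩
      · exact ⟨hw, h'⟩
  · rw [Finset.disjoint_filter]
    rintro w _ hwa ⟨haw, _⟩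
    exact absurd (hwa.trans haw) (lt_irrefl w)

lemma parity_sign (η : Finset V) (a b : V) (ha : a ∉ η) (hb : b ∉ η) (hab : a ≠ b) :
    (-1 : ℝ) ^ ((η.filter (· < a)).card + (η.filter (· < b)).card)
      = (-1 : ℝ) ^ ((η.filter fun w => min a b < w ∧ w < max a b).card) := by
  rcases hab.lt_or_gt with h | h
  · rw [parity_core η a b ha h, min_eq_left h.le, max_eq_right h.le]
    rw [← add_assoc, pow_add, pow_add, ← mul_pow]
    norm_num
  · rw [parity_core η b a hb h, min_eq_right h.le, max_eq_left h.le, add_comm]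
    rw [← add_assoc, pow_add, pow_add, ← mul_pow]
    norm_num

lemma inter_insert_insert (a b : V) (η : Finset V) (ha : a ∉ η) (hb : b ∉ η) (hab : a ≠ b) :
    (insert a η) ∩ (insert b η) = η := by
  ext x
  simp only [mem_inter, mem_insert]
  constructor
  · rintro ⟨h1 | h1, h2 | h2⟩ <;> first | assumption | (exfalso; subst h1; tauto)
  · tauto

lemma insert_sdiff_insert'' (a b : V) (η : Finset V) (ha : a ∉ η) (hab : a ≠ b) :
    insert a η \ insert b η = {a} := by
  ext x
  simp only [mem_sdiff, mem_insert, mem_singleton, not_or]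
  constructor
  · rintro ⟨h1 | h1, h2, h3⟩
    · exact h1
    · exact absurd h1 h3
  · rintro rfl; exact ⟨Or.inl rfl, hab, ha⟩

/-- Sign lemma 1 -/
lemma bsgn_mul_bsgn (a b : V) (η : Finset V) (ha : a ∉ η) (hb : b ∉ η) (hab : a ≠ b) :
    bsgn (insert a η) η * bsgn (insert b η) η = epsSign (insert a η) (insert b η) := by
  rw [bsgn_insert a η ha, bsgn_insert b η hb,
    epsSign_eq (insert a η) (insert b η) a b
      (insert_sdiff_insert'' a b η ha hab)
      (insert_sdiff_insert'' b a η hb hab.symm),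
    inter_insert_insert a b η ha hb hab, ← pow_add]
  exact parity_sign η a b ha hb hab

/-- Sign lemma 2 -/
lemma bsgn_mul_bsgn' (a b : V) (η : Finset V) (ha : a ∉ η) (hb : b ∉ η) (hab : a ≠ b) :
    bsgn (insert a (insert b η)) (insert b η) * bsgn (insert a (insert b η)) (insert a η)
      = -epsSign (insert a η) (insert b η) := by
  have hanb : a ∉ insert b η := by simp [hab, ha]
  have hbna : b ∉ insert a η := by simp [hab.symm, hb]
  have hcomm : insert a (insert b η) = insert b (insert a η) := Finset.insert_comm a b η
  rw [bsgn_insert a (insert b η) hanb]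
  rw [hcomm, bsgn_insert b (insert a η) hbna]
  rw [epsSign_eq (insert a η) (insert b η) a b
      (insert_sdiff_insert'' a b η ha hab)
      (insert_sdiff_insert'' b a η hb hab.symm),
    inter_insert_insert a b η ha hb hab]
  have hfa : ((insert b η).filter (· < a)).card
      = (η.filter (· < a)).card + (if b < a then 1 else 0) := by
    rw [Finset.filter_insert]
    split_ifs with h
    · rw [Finset.card_insert_of_notMem (fun hc => hb (Finset.mem_of_mem_filter b hc))]
    · rfl
  have hfb : ((insert a η).filter (· < b)).card
      = (η.filter (· < b)).card + (if a < b then 1 else 0) := by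
    rw [Finset.filter_insert]
    split_ifs with h
    · rw [Finset.card_insert_of_notMem (fun hc => ha (Finset.mem_of_mem_filter a hc))]
    · rfl
  rw [hfa, hfb, ← pow_add]
  have hone : (if b < a then 1 else 0) + (if a < b then 1 else 0) = 1 := by
    rcases hab.lt_or_gt with h | h
    · rw [if_neg (asymm h), if_pos h]
    · rw [if_pos h, if_neg (asymm h)]
  have : (η.filter (· < a)).card + (if b < a then 1 else 0)
        + ((η.filter (· < b)).card + (if a < b then 1 else 0))
      = ((η.filter (· < a)).card + (η.filter (· < b)).card) + 1 := by omega
  rw [this, pow_succ, parity_sign η a b ha hb hab]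
  ring

end SignLemmas

section DownLaplacian

variable {V : Type*} [Fintype V] [LinearOrder V]

/-- The down-Laplacian-type matrix on all `s`-element subsets of `V`. -/
noncomputable def dMat (ω : V → ℝ) (s : ℕ) :
    Matrix {σ : Finset V // σ.card = s} {σ : Finset V // σ.card = s} ℝ := fun σ τ =>
  if σ = τ then ∑ v ∈ σ.1, ω v
  else if (σ.1 ∩ τ.1).card + 1 = s then epsSign σ.1 τ.1 * ∏ v ∈ τ.1 \ σ.1, ω v
  else 0

noncomputable def Bmat (V : Type*) [Fintype V] [LinearOrder V] (s : ℕ) :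
    Matrix {σ : Finset V // σ.card = s + 1} {σ : Finset V // σ.card = s} ℝ :=
  fun σ η => if η.1 ⊆ σ.1 then bsgn σ.1 η.1 else 0

noncomputable def Cmat (ω : V → ℝ) (s : ℕ) :
    Matrix {σ : Finset V // σ.card = s} {σ : Finset V // σ.card = s + 1} ℝ :=
  fun η τ => if η.1 ⊆ τ.1 then bsgn τ.1 η.1 * ∏ v ∈ τ.1 \ η.1, ω v else 0

lemma bsgn_mul_self (σ η : Finset V) (r : ℝ) : bsgn σ η * (bsgn σ η * r) = r := by
  rw [← mul_assoc, bsgn]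
  split_ifs with h
  · rw [← pow_add, ← two_mul, pow_mul]
    norm_num
  · norm_num

/-- Sum over all `s`-element subsets contained in a fixed `(s+1)`-element set. -/
lemma sum_sub_subsets {s : ℕ} (σ : Finset V) (hσ : σ.card = s + 1) (G : Finset V → ℝ) :
    ∑ η : {η : Finset V // η.card = s}, (if η.1 ⊆ σ then G η.1 else 0)
      = ∑ v ∈ σ, G (σ.erase v) := by
  rw [← Finset.sum_subtype (univ.powersetCard s)
    (fun t => Finset.mem_powersetCard_univ) (fun t => if t ⊆ σ then G t else 0)]
  rw [← Finset.sum_filter]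
  have himg : (univ.powersetCard s).filter (· ⊆ σ) = σ.image (fun v => σ.erase v) := by
    ext t
    simp only [mem_filter, Finset.mem_powersetCard_univ, Finset.mem_image]
    constructor
    · rintro ⟨hcard, hsub⟩
      have h1 : (σ \ t).card = 1 := by
        rw [Finset.card_sdiff_of_subset hsub, hσ, hcard]; omega
      obtain ⟨v, hv⟩ := Finset.card_eq_one.mp h1
      refine ⟨v, ?_, ?_⟩
      · have : v ∈ σ \ t := by rw [hv]; exact mem_singleton_self v
        exact (Finset.mem_sdiff.mp this).1
      · rw [Finset.erase_eq, ← hv, Finset.sdiff_sdiff_self_left,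
          Finset.inter_eq_right.mpr hsub]
    · rintro ⟨v, hv, rfl⟩
      constructor
      · rw [Finset.card_erase_of_mem hv, hσ]; omega
      · exact Finset.erase_subset v σ
  rw [himg, Finset.sum_image]
  intro v hv w hw h
  by_contra hne
  have : v ∈ σ.erase w := Finset.mem_erase.mpr ⟨hne, hv⟩
  rw [← show σ.erase v = σ.erase w from h] at this
  exact (Finset.mem_erase.mp this).1 rfl

/-- Sum over all `(s+1)`-element subsets containing a fixed `s`-element set. -/
lemma sum_sup_subsets {s : ℕ} (η : Finset V) (hη : η.card = s) (G : Finset V → ℝ) :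
    ∑ σ : {σ : Finset V // σ.card = s + 1}, (if η ⊆ σ.1 then G σ.1 else 0)
      = ∑ v ∈ univ \ η, G (insert v η) := by
  rw [← Finset.sum_subtype (univ.powersetCard (s + 1))
    (fun t => Finset.mem_powersetCard_univ) (fun t => if η ⊆ t then G t else 0)]
  rw [← Finset.sum_filter]
  have himg : (univ.powersetCard (s + 1)).filter (η ⊆ ·)
      = (univ \ η).image (fun v => insert v η) := by
    ext t
    simp only [mem_filter, Finset.mem_powersetCard_univ, Finset.mem_image, Finset.mem_sdiff,
      Finset.mem_univ, true_and]
    constructor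
    · rintro ⟨hcard, hsub⟩
      have h1 : (t \ η).card = 1 := by
        rw [Finset.card_sdiff_of_subset hsub, hη, hcard]; omega
      obtain ⟨v, hv⟩ := Finset.card_eq_one.mp h1
      have hvmem : v ∈ t \ η := by rw [hv]; exact mem_singleton_self v
      refine ⟨v, (Finset.mem_sdiff.mp hvmem).2, ?_⟩
      rw [Finset.insert_eq, ← hv, Finset.sdiff_union_of_subset hsub]
    · rintro ⟨v, hv, rfl⟩
      exact ⟨by rw [Finset.card_insert_of_notMem hv, hη], Finset.subset_insert v η⟩
  rw [himg, Finset.sum_image]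
  intro v hv w hw h
  by_contra hne
  have hvm : v ∈ insert w η := (show insert v η = insert w η from h) ▸ Finset.mem_insert_self v η
  rcases Finset.mem_insert.mp hvm with h' | h'
  · exact hne h'
  · exact (Finset.mem_sdiff.mp hv).2 h'

end DownLaplacian

section Factorization

variable {V : Type*} [Fintype V] [LinearOrder V]

lemma sdiff_card_one {σ τ : Finset V} (hcap : (σ ∩ τ).card + 1 = σ.card) :
    (σ \ τ).card = 1 := by
  have h := Finset.card_inter_add_card_sdiff σ τ
  omega

lemma eq_insert_of_inter {σ τ : Finset V} {a : V} (ha : σ \ τ = {a}) :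
    σ = insert a (σ ∩ τ) := by
  rw [Finset.insert_eq, Finset.union_comm, ← ha]
  ext x
  simp only [Finset.mem_union, Finset.mem_inter, Finset.mem_sdiff]
  tauto

lemma Bmat_mul_Cmat (ω : V → ℝ) (s : ℕ) : Bmat V s * Cmat ω s = dMat ω (s + 1) := by
  ext σ τ
  rw [Matrix.mul_apply, dMat]
  by_cases hst : σ = τ
  · subst hst
    rw [if_pos rfl]
    have hterm : ∀ η : {η : Finset V // η.card = s},
        Bmat V s σ η * Cmat ω s η σ
          = (if η.1 ⊆ σ.1 then ∏ v ∈ σ.1 \ η.1, ω v else 0) := by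
      intro η
      rw [Bmat, Cmat]
      split_ifs with h
      · exact bsgn_mul_self _ _ _
      · ring
    rw [Finset.sum_congr rfl (fun η _ => hterm η),
      sum_sub_subsets σ.1 σ.2 (fun t => ∏ v ∈ σ.1 \ t, ω v)]
    apply Finset.sum_congr rfl
    intro v hv
    have : σ.1 \ σ.1.erase v = {v} := by
      ext x
      simp only [Finset.mem_sdiff, Finset.mem_erase, Finset.mem_singleton, not_and]
      constructor
      · rintro ⟨hx, h2⟩
        by_contra hne
        exact (h2 hne) hx
      · rintro rfl; exact ⟨hv, fun h _ => absurd rfl h⟩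
    rw [this, Finset.prod_singleton]
  · rw [if_neg hst]
    have hne1 : σ.1 ≠ τ.1 := fun h => hst (Subtype.ext h)
    have hle : (σ.1 ∩ τ.1).card ≤ s := by
      by_contra hcon
      push_neg at hcon
      have h1 : σ.1 ∩ τ.1 = σ.1 :=
        Finset.eq_of_subset_of_card_le Finset.inter_subset_left (by rw [σ.2]; omega)
      have hsub : σ.1 ⊆ τ.1 := by rw [← h1]; exact Finset.inter_subset_right
      exact hne1 (Finset.eq_of_subset_of_card_le hsub (by rw [σ.2, τ.2]))
    by_cases hcap : (σ.1 ∩ τ.1).card + 1 = s + 1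
    · rw [if_pos hcap]
      have hcap' : (σ.1 ∩ τ.1).card = s := by omega
      set η₀ : {η : Finset V // η.card = s} := ⟨σ.1 ∩ τ.1, hcap'⟩ with hη₀
      rw [Finset.sum_eq_single η₀]
      · obtain ⟨a, ha⟩ := Finset.card_eq_one.mp
          (sdiff_card_one (σ := σ.1) (τ := τ.1) (by rw [σ.2]; omega))
        obtain ⟨b, hb⟩ := Finset.card_eq_one.mp
          (sdiff_card_one (σ := τ.1) (τ := σ.1) (by rw [Finset.inter_comm, τ.2]; omega))
        have haσ : σ.1 = insert a (σ.1 ∩ τ.1) := eq_insert_of_inter ha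
        have hbτ : τ.1 = insert b (σ.1 ∩ τ.1) := by
          rw [Finset.inter_comm]; exact eq_insert_of_inter hb
        have hamem : a ∈ σ.1 \ τ.1 := by rw [ha]; exact Finset.mem_singleton_self a
        have hbmem : b ∈ τ.1 \ σ.1 := by rw [hb]; exact Finset.mem_singleton_self b
        have hanin : a ∉ σ.1 ∩ τ.1 := fun h =>
          (Finset.mem_sdiff.mp hamem).2 (Finset.mem_inter.mp h).2
        have hbnin : b ∉ σ.1 ∩ τ.1 := fun h =>
          (Finset.mem_sdiff.mp hbmem).2 (Finset.mem_inter.mp h).1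
        have hab : a ≠ b := by
          intro h
          exact (Finset.mem_sdiff.mp hamem).2 (h ▸ (Finset.mem_sdiff.mp hbmem).1)
        rw [Bmat, Cmat]
        rw [if_pos (show η₀.1 ⊆ σ.1 from Finset.inter_subset_left),
          if_pos (show η₀.1 ⊆ τ.1 from Finset.inter_subset_right)]
        have hprod : τ.1 \ η₀.1 = τ.1 \ σ.1 := by
          show τ.1 \ (σ.1 ∩ τ.1) = τ.1 \ σ.1
          rw [Finset.inter_comm, Finset.sdiff_inter_self_left]
        rw [hprod, ← mul_assoc]
        congr 1
        show bsgn σ.1 (σ.1 ∩ τ.1) * bsgn τ.1 (σ.1 ∩ τ.1) = epsSign σ.1 τ.1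
        calc bsgn σ.1 (σ.1 ∩ τ.1) * bsgn τ.1 (σ.1 ∩ τ.1)
            = bsgn (insert a (σ.1 ∩ τ.1)) (σ.1 ∩ τ.1)
              * bsgn (insert b (σ.1 ∩ τ.1)) (σ.1 ∩ τ.1) := by rw [← haσ, ← hbτ]
          _ = epsSign (insert a (σ.1 ∩ τ.1)) (insert b (σ.1 ∩ τ.1)) :=
              bsgn_mul_bsgn a b _ hanin hbnin hab
          _ = epsSign σ.1 τ.1 := by rw [← haσ, ← hbτ]
      · intro η _ hne
        rw [Bmat, Cmat]
        split_ifs with h1 h2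
        · exfalso
          apply hne
          apply Subtype.ext
          show η.1 = σ.1 ∩ τ.1
          exact Finset.eq_of_subset_of_card_le (Finset.subset_inter h1 h2)
            (by rw [η.2, hcap'])
        all_goals ring
      · intro h
        exact absurd (Finset.mem_univ η₀) h
    · rw [if_neg hcap]
      apply Finset.sum_eq_zero
      intro η _
      rw [Bmat, Cmat]
      split_ifs with h1 h2
      · exfalso
        apply hcap
        have : η.1 ⊆ σ.1 ∩ τ.1 := Finset.subset_inter h1 h2
        have hcard := Finset.card_le_card this
        rw [η.2] at hcard
        omega
      all_goals ring

lemma Cmat_mul_Bmat (ω : V → ℝ) (s : ℕ) :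
    Cmat ω s * Bmat V s
      = (∑ v, ω v) • (1 : Matrix {σ : Finset V // σ.card = s}
          {σ : Finset V // σ.card = s} ℝ) - dMat ω s := by
  ext η θ
  rw [Matrix.mul_apply, Matrix.sub_apply, Matrix.smul_apply]
  by_cases hst : η = θ
  · subst hst
    rw [Matrix.one_apply_eq, dMat, if_pos rfl, smul_eq_mul, mul_one]
    have hterm : ∀ σ : {σ : Finset V // σ.card = s + 1},
        Cmat ω s η σ * Bmat V s σ η
          = (if η.1 ⊆ σ.1 then ∏ v ∈ σ.1 \ η.1, ω v else 0) := by
      intro σ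
      rw [Cmat, Bmat]
      split_ifs with h
      · rw [mul_comm]
        exact bsgn_mul_self _ _ _
      · ring
    rw [Finset.sum_congr rfl (fun σ _ => hterm σ),
      sum_sup_subsets η.1 η.2 (fun t => ∏ v ∈ t \ η.1, ω v)]
    have : ∀ v ∈ univ \ η.1, (∏ w ∈ (insert v η.1) \ η.1, ω w) = ω v := by
      intro v hv
      rw [insert_sdiff_base v η.1 (Finset.mem_sdiff.mp hv).2, Finset.prod_singleton]
    rw [Finset.sum_congr rfl this, Finset.sum_sdiff_eq_sub (Finset.subset_univ _)]
  · rw [Matrix.one_apply_ne hst, dMat, if_neg hst, smul_eq_mul, mul_zero, zero_sub]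
    have hηθ : η.1 ≠ θ.1 := fun h => hst (Subtype.ext h)
    have hle : (η.1 ∩ θ.1).card < s := by
      have h1 : (η.1 ∩ θ.1).card ≤ s := by
        have := Finset.card_le_card (show η.1 ∩ θ.1 ⊆ η.1 from Finset.inter_subset_left)
        rw [η.2] at this; exact this
      rcases lt_or_eq_of_le h1 with h | h
      · exact h
      · exfalso
        have h2 : η.1 ∩ θ.1 = η.1 :=
          Finset.eq_of_subset_of_card_le Finset.inter_subset_left (by rw [η.2, h])
        have hsub : η.1 ⊆ θ.1 := by rw [← h2]; exact Finset.inter_subset_right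
        exact hηθ (Finset.eq_of_subset_of_card_le hsub (by rw [η.2, θ.2]))
    by_cases hcap : (η.1 ∩ θ.1).card + 1 = s
    · rw [if_pos hcap]
      have hcard : (η.1 ∪ θ.1).card = s + 1 := by
        have := Finset.card_union_add_card_inter η.1 θ.1
        rw [η.2, θ.2] at this
        omega
      set σ₀ : {σ : Finset V // σ.card = s + 1} := ⟨η.1 ∪ θ.1, hcard⟩ with hσ₀
      rw [Finset.sum_eq_single σ₀]
      · rw [Cmat, Bmat]
        rw [if_pos (show η.1 ⊆ σ₀.1 from Finset.subset_union_left),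
          if_pos (show θ.1 ⊆ σ₀.1 from Finset.subset_union_right)]
        obtain ⟨a, ha⟩ := Finset.card_eq_one.mp
          (sdiff_card_one (σ := η.1) (τ := θ.1) (by rw [η.2]; exact hcap))
        obtain ⟨b, hb⟩ := Finset.card_eq_one.mp
          (sdiff_card_one (σ := θ.1) (τ := η.1) (by rw [Finset.inter_comm, θ.2]; exact hcap))
        have haη : η.1 = insert a (η.1 ∩ θ.1) := eq_insert_of_inter ha
        have hbθ : θ.1 = insert b (η.1 ∩ θ.1) := by
          rw [Finset.inter_comm]; exact eq_insert_of_inter hb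
        have hamem : a ∈ η.1 \ θ.1 := by rw [ha]; exact Finset.mem_singleton_self a
        have hbmem : b ∈ θ.1 \ η.1 := by rw [hb]; exact Finset.mem_singleton_self b
        have hanin : a ∉ η.1 ∩ θ.1 := fun h =>
          (Finset.mem_sdiff.mp hamem).2 (Finset.mem_inter.mp h).2
        have hbnin : b ∉ η.1 ∩ θ.1 := fun h =>
          (Finset.mem_sdiff.mp hbmem).2 (Finset.mem_inter.mp h).1
        have hab : a ≠ b := by
          intro h
          exact (Finset.mem_sdiff.mp hamem).2 (h ▸ (Finset.mem_sdiff.mp hbmem).1)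
        have hσeq : σ₀.1 = insert a (insert b (η.1 ∩ θ.1)) := by
          show η.1 ∪ θ.1 = _
          rw [haη, hbθ]
          ext x
          simp only [Finset.mem_union, Finset.mem_insert, Finset.mem_inter]
          tauto
        have hprod : σ₀.1 \ η.1 = θ.1 \ η.1 := Finset.union_sdiff_left η.1 θ.1
        rw [hprod]
        have key : bsgn σ₀.1 η.1 * bsgn σ₀.1 θ.1 = -epsSign η.1 θ.1 := by
          calc bsgn σ₀.1 η.1 * bsgn σ₀.1 θ.1
              = bsgn (insert a (insert b (η.1 ∩ θ.1))) (insert b (η.1 ∩ θ.1))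
                * bsgn (insert a (insert b (η.1 ∩ θ.1))) (insert a (η.1 ∩ θ.1)) := by
                rw [← hσeq, ← haη, ← hbθ]; ring
            _ = -epsSign (insert a (η.1 ∩ θ.1)) (insert b (η.1 ∩ θ.1)) :=
                bsgn_mul_bsgn' a b _ hanin hbnin hab
            _ = -epsSign η.1 θ.1 := by rw [← haη, ← hbθ]
        calc bsgn σ₀.1 η.1 * (∏ v ∈ θ.1 \ η.1, ω v) * bsgn σ₀.1 θ.1
            = (bsgn σ₀.1 η.1 * bsgn σ₀.1 θ.1) * ∏ v ∈ θ.1 \ η.1, ω v := by ring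
          _ = -(epsSign η.1 θ.1 * ∏ v ∈ θ.1 \ η.1, ω v) := by rw [key]; ring
      · intro σ _ hne
        rw [Cmat, Bmat]
        split_ifs with h1 h2
        · exfalso
          apply hne
          apply Subtype.ext
          show σ.1 = η.1 ∪ θ.1
          exact (Finset.eq_of_subset_of_card_le (Finset.union_subset h1 h2)
            (by rw [σ.2, hcard])).symm
        all_goals ring
      · intro h
        exact absurd (Finset.mem_univ σ₀) h
    · rw [if_neg hcap, neg_zero]
      apply Finset.sum_eq_zero
      intro σ _
      rw [Cmat, Bmat]
      split_ifs with h1 h2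
      · exfalso
        apply hcap
        have hsub : η.1 ∪ θ.1 ⊆ σ.1 := Finset.union_subset h1 h2
        have hc1 := Finset.card_le_card hsub
        have hc2 := Finset.card_union_add_card_inter η.1 θ.1
        rw [η.2, θ.2] at hc2
        rw [σ.2] at hc1
        omega
      all_goals ring

end Factorization

section Induction

variable {V : Type*} [Fintype V] [LinearOrder V]

lemma dMat_zero (ω : V → ℝ) : dMat ω 0 = (0 : ℝ) • (1 : Matrix _ _ ℝ) := by
  ext σ τ
  have hσ : σ.1 = ∅ := Finset.card_eq_zero.mp σ.2
  have hτ : τ.1 = ∅ := Finset.card_eq_zero.mp τ.2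
  have hστ : σ = τ := Subtype.ext (hσ.trans hτ.symm)
  subst hστ
  rw [dMat, if_pos rfl, hσ]
  simp

lemma card_sub (s : ℕ) :
    Fintype.card {σ : Finset V // σ.card = s} = (Fintype.card V).choose s :=
  Fintype.card_finset_len s

lemma dMat_charpoly (ω : V → ℝ) (hn : 1 ≤ Fintype.card V) (s : ℕ) :
    (dMat (V := V) ω s).charpoly
      = (Polynomial.X - Polynomial.C (∑ v, ω v))
            ^ ((Fintype.card V).choose s - (Fintype.card V - 1).choose s)
          * Polynomial.X ^ ((Fintype.card V - 1).choose s) := by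
  obtain ⟨m, hm⟩ : ∃ m, Fintype.card V = m + 1 := ⟨Fintype.card V - 1, by omega⟩
  set c : ℝ := ∑ v, ω v with hc
  induction s with
  | zero =>
      rw [dMat_zero, charpoly_smul_one', card_sub, hm]
      simp [Nat.choose_zero_right]
  | succ s ih =>
      have hle1 : (Fintype.card V - 1).choose s ≤ (Fintype.card V).choose s :=
        Nat.choose_le_choose s (by omega)
      have hflip := charpoly_flip (dMat ω s) c
        ((Fintype.card V).choose s - (Fintype.card V - 1).choose s)
        ((Fintype.card V - 1).choose s)
        (by rw [card_sub]; omega) ih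
      have hkey := charpoly_mul_comm_pow (Bmat V s) (Cmat ω s)
      rw [Bmat_mul_Cmat, Cmat_mul_Bmat, card_sub, card_sub, hflip] at hkey
      have hpas : (Fintype.card V).choose (s + 1)
          = (Fintype.card V - 1).choose s + (Fintype.card V - 1).choose (s + 1) := by
        rw [hm]
        simp only [Nat.add_sub_cancel]
        exact Nat.choose_succ_succ m s
      -- rearrange the RHS of hkey
      have hexp : (Fintype.card V).choose (s + 1)
            + ((Fintype.card V).choose s - (Fintype.card V - 1).choose s)
          = (Fintype.card V).choose s + (Fintype.card V - 1).choose (s + 1) := by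
        omega
      have h2 : Polynomial.X ^ (Fintype.card V).choose s
            * (dMat (V := V) ω (s + 1)).charpoly
          = Polynomial.X ^ (Fintype.card V).choose s
            * ((Polynomial.X - Polynomial.C c) ^ (Fintype.card V - 1).choose s
              * Polynomial.X ^ (Fintype.card V - 1).choose (s + 1)) := by
        rw [hkey]
        rw [show ∀ (P Q R : Polynomial ℝ), P * (Q * R) = (P * R) * Q from fun P Q R => by ring]
        rw [← pow_add, hexp, pow_add]
        ring
      have hX : (Polynomial.X : Polynomial ℝ) ^ (Fintype.card V).choose s ≠ 0 :=
        pow_ne_zero _ Polynomial.X_ne_zero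
      have := mul_left_cancel₀ hX h2
      rw [this, hpas]
      congr 2
      omega

end Induction

section Final

lemma roots_prod_pow (c : ℝ) (a b : ℕ) :
    ((Polynomial.X - Polynomial.C c) ^ a * Polynomial.X ^ b : Polynomial ℝ).roots
      = Multiset.replicate a c + Multiset.replicate b 0 := by
  rw [Polynomial.roots_mul (mul_ne_zero (pow_ne_zero _ (Polynomial.X_sub_C_ne_zero c))
    (pow_ne_zero _ Polynomial.X_ne_zero)), Polynomial.roots_pow, Polynomial.roots_pow,
    Polynomial.roots_X_sub_C, Polynomial.roots_X, Multiset.nsmul_singleton,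
    Multiset.nsmul_singleton]


end Final

/-- The vertex-weighted Laplacian spectrum of a complex with complete
`p`-skeleton: for `-1 ≤ k ≤ p-1` the spectrum is `Σ_{v∈V} ω(v)` with multiplicity
`C(n,k+1)`; if `k = p = dim X` it is `Σ_{v∈V} ω(v)` with multiplicity `C(n-1,k)`
together with `0` with multiplicity `C(n-1,k+1)`. -/
theorem statement2 {V : Type*} [Fintype V] [LinearOrder V]
    (X : AbstractSC V) (ω : V → ℝ) (hω : ∀ v, 0 < ω v)
    (n : ℕ) (hn : Fintype.card V = n)
    (p : ℕ) (hcomplete : ∀ σ : Finset V, σ.card ≤ p + 1 → σ ∈ X.faces) :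
    (∀ k : ℤ, -1 ≤ k → k ≤ (p : ℤ) - 1 →
      spec (lapZ X ω k) = Multiset.replicate (n.choose (k + 1).toNat) (∑ v, ω v)) ∧
    ((p : ℤ) = X.dimension →
      spec (lapFull X ω (p + 1)) =
        Multiset.replicate ((n - 1).choose p) (∑ v, ω v) +
          Multiset.replicate ((n - 1).choose (p + 1)) (0 : ℝ)) := by
  constructor
  · intro k hk1 hk2
    set s : ℕ := (k + 1).toNat with hs
    have hks : (s : ℤ) = k + 1 := Int.toNat_of_nonneg (by omega)
    have hsp' : s ≤ p := by omega
    have hface : ∀ σ : Finset V, σ.card ≤ s + 1 → σ ∈ X.faces := fun σ h =>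
      hcomplete σ (by omega)
    have hM : lapZ X ω k
        = (∑ v, ω v) • (1 : Matrix (X.Face s) (X.Face s) ℝ) := by
      ext σ τ
      by_cases hst : σ = τ
      · subst hst
        rw [Matrix.smul_apply, Matrix.one_apply_eq, smul_eq_mul, mul_one]
        show (if σ = σ then (∑ v ∈ X.link σ.1, ω v) + ∑ v ∈ σ.1, ω v
          else if (σ.1 ∩ σ.1).card + 1 = s ∧ σ.1 ∪ σ.1 ∉ X.faces then
            epsSign σ.1 σ.1 * ∏ v ∈ σ.1 \ σ.1, ω v else 0) = ∑ v, ω v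
        rw [if_pos rfl]
        have hlink : X.link σ.1 = univ \ σ.1 := by
          ext v
          simp only [AbstractSC.link, mem_filter, mem_univ, true_and, mem_sdiff]
          constructor
          · exact fun h => h.1
          · intro hv
            exact ⟨hv, hface _ (by rw [Finset.card_insert_of_notMem hv, σ.2.2])⟩
        rw [hlink]
        exact Finset.sum_sdiff (Finset.subset_univ σ.1)
      · rw [Matrix.smul_apply, Matrix.one_apply_ne hst, smul_zero]
        show (if σ = τ then (∑ v ∈ X.link σ.1, ω v) + ∑ v ∈ σ.1, ω v
          else if (σ.1 ∩ τ.1).card + 1 = s ∧ σ.1 ∪ τ.1 ∉ X.faces then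
            epsSign σ.1 τ.1 * ∏ v ∈ τ.1 \ σ.1, ω v else 0) = 0
        rw [if_neg hst, if_neg]
        rintro ⟨h1, h2⟩
        apply h2
        apply hface
        have h3 := Finset.card_union_add_card_inter σ.1 τ.1
        rw [σ.2.2, τ.2.2] at h3
        omega
    have hcard : Fintype.card (X.Face s) = n.choose s := by
      rw [← hn, ← card_sub (V := V) s]
      apply Fintype.card_congr
      exact Equiv.subtypeEquivRight (fun σ =>
        ⟨fun h => h.2, fun h => ⟨hface σ (by omega), h⟩⟩)
    unfold spec
    rw [hM, charpoly_smul_one', hcard, Polynomial.roots_pow, Polynomial.roots_X_sub_C,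
      Multiset.nsmul_singleton]
  · intro hdim
    have hsup : X.faces.sup Finset.card = p + 1 := by
      unfold AbstractSC.dimension at hdim
      omega
    have hcard_le : ∀ σ ∈ X.faces, σ.card ≤ p + 1 := fun σ h => hsup ▸ Finset.le_sup h
    have hn1 : p + 1 ≤ Fintype.card V := by
      obtain ⟨σ, hσm, hσe⟩ :=
        Finset.exists_mem_eq_sup X.faces ⟨∅, X.empty_mem⟩ Finset.card
      have h1 : σ.card = p + 1 := by omega
      calc p + 1 = σ.card := h1.symm
        _ ≤ (univ : Finset V).card := Finset.card_le_card (Finset.subset_univ σ)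
        _ = Fintype.card V := Finset.card_univ
    let e : X.Face (p + 1) ≃ {σ : Finset V // σ.card = p + 1} :=
      { toFun := fun σ => ⟨σ.1, σ.2.2⟩
        invFun := fun σ => ⟨σ.1, ⟨hcomplete σ.1 σ.2.le, σ.2⟩⟩
        left_inv := fun σ => Subtype.ext rfl
        right_inv := fun σ => Subtype.ext rfl }
    have hval : ∀ σ : X.Face (p + 1), ((e σ) : Finset V) = σ.1 := fun _ => rfl
    have hsub : lapFull X ω (p + 1) = (dMat ω (p + 1)).submatrix e e := by
      ext σ τ
      rw [Matrix.submatrix_apply]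
      by_cases hst : σ = τ
      · subst hst
        show (if σ = σ then (∑ v ∈ X.link σ.1, ω v) + ∑ v ∈ σ.1, ω v
          else if (σ.1 ∩ σ.1).card + 1 = p + 1 ∧ σ.1 ∪ σ.1 ∉ X.faces then
            epsSign σ.1 σ.1 * ∏ v ∈ σ.1 \ σ.1, ω v else 0) = dMat ω (p + 1) (e σ) (e σ)
        rw [if_pos rfl, dMat, if_pos rfl, hval]
        have hlink : X.link σ.1 = ∅ := by
          ext v
          simp only [AbstractSC.link, mem_filter, mem_univ, true_and,
            Finset.notMem_empty, iff_false, not_and]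
          intro hv hmem
          have h1 := hcard_le _ hmem
          rw [Finset.card_insert_of_notMem hv, σ.2.2] at h1
          omega
        rw [hlink, Finset.sum_empty, zero_add]
      · have hst' : e σ ≠ e τ := fun h => hst (e.injective h)
        show (if σ = τ then (∑ v ∈ X.link σ.1, ω v) + ∑ v ∈ σ.1, ω v
          else if (σ.1 ∩ τ.1).card + 1 = p + 1 ∧ σ.1 ∪ τ.1 ∉ X.faces then
            epsSign σ.1 τ.1 * ∏ v ∈ τ.1 \ σ.1, ω v else 0) = dMat ω (p + 1) (e σ) (e τ)
        rw [if_neg hst, dMat, if_neg hst', hval, hval]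
        by_cases hcap : (σ.1 ∩ τ.1).card + 1 = p + 1
        · have hun : σ.1 ∪ τ.1 ∉ X.faces := by
            intro hmem
            have h1 := hcard_le _ hmem
            have h2 := Finset.card_union_add_card_inter σ.1 τ.1
            rw [σ.2.2, τ.2.2] at h2
            omega
          rw [if_pos ⟨hcap, hun⟩, if_pos hcap]
        · rw [if_neg (fun h => hcap h.1), if_neg hcap]
    unfold spec
    rw [hsub, show (dMat (V := V) ω (p + 1)).submatrix e e
        = Matrix.reindex e.symm e.symm (dMat ω (p + 1)) by
          rw [Matrix.reindex_apply, Equiv.symm_symm],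
      Matrix.charpoly_reindex, dMat_charpoly ω (by omega) (p + 1), hn]
    have hpas : n.choose (p + 1) - (n - 1).choose (p + 1) = (n - 1).choose p := by
      obtain ⟨m, rfl⟩ : ∃ m, n = m + 1 := ⟨n - 1, by omega⟩
      simp only [Nat.add_sub_cancel]
      have h4 : (m + 1).choose (p + 1) = m.choose p + m.choose (p + 1) :=
        Nat.choose_succ_succ m p
      have hle : m.choose (p + 1) ≤ (m + 1).choose (p + 1) :=
        Nat.choose_le_choose (p + 1) (by omega)
      omega
    rw [hpas, roots_prod_pow]
end

section
/- Let X be an abstract simplicial complex on a finite vertex set V of size n with vertex weight function ω, let −1 ≤ k ≤ dim(X), and let X_{k+1}^c = {τ ⊆ V : τ ⊆ σ for some (k+2)-subset σ of V with σ ∉ X}. Then, as matrices indexed by all (k+1)-subsets of V, L_k^{ω,up}(X) + L_k^{ω,up}(X_{k+1}^c) = L_k^{ω,up}(Δ^{(k+1)}), where Δ^{(k+1)} is the (k+1)-skeleton of the complete simplicial complex on V (all subsets of V of cardinality at most k+2); moreover the three matrices L_k^{ω,up}(X), L_k^{ω,up}(X_{k+1}^c), and L_k^{ω,up}(Δ^{(k+1)})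 pairwise commute. -/
open Finset

variable {V : Type*} [Fintype V] [LinearOrder V]

set_option linter.unusedSectionVars false
open Matrix

/-- Insertion sign. -/
def sgnIns (σ : Finset V) (v : V) : ℝ := (-1) ^ (σ.filter (· < v)).card

lemma sgnIns_sq (σ : Finset V) (v : V) : sgnIns σ v * sgnIns σ v = 1 := by
  rw [sgnIns, ← pow_add]
  exact Even.neg_one_pow ⟨_, rfl⟩

lemma sgnIns_insert (η : Finset V) {a : V} (ha : a ∉ η) (b : V) :
    sgnIns (insert a η) b = (if a < b then -1 else 1) * sgnIns η b := by
  rw [sgnIns, sgnIns, Finset.filter_insert]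
  split
  · rw [Finset.card_insert_of_notMem (fun h => ha (Finset.mem_of_mem_filter _ h)), pow_succ]
    ring
  · rw [one_mul]

lemma sgn_key (η : Finset V) {a b : V} (ha : a ∉ η) (hab : a < b) :
    (-1 : ℝ) ^ (η.filter fun w => a < w ∧ w < b).card = sgnIns η a * sgnIns η b := by
  have h1 : (η.filter (· < b)).filter (· < a) = η.filter (· < a) := by
    rw [Finset.filter_filter]
    exact Finset.filter_congr fun x hx => ⟨And.right, fun h => ⟨h.trans hab, h⟩⟩
  have h2 : (η.filter (· < b)).filter (fun x => ¬ x < a) = η.filter (fun w => a < w ∧ w < b) := by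
    rw [Finset.filter_filter]
    refine Finset.filter_congr fun x hx => ?_
    constructor
    · rintro ⟨hxb, hxa⟩
      exact ⟨lt_of_le_of_ne (not_lt.1 hxa) (fun h => ha (h ▸ hx)), hxb⟩
    · rintro ⟨hax, hxb⟩
      exact ⟨hxb, not_lt.2 hax.le⟩
  have hsplit : (η.filter (· < a)).card + (η.filter fun w => a < w ∧ w < b).card
      = (η.filter (· < b)).card := by
    rw [← h1, ← h2, Finset.card_filter_add_card_filter_not]
  rw [sgnIns, sgnIns, ← pow_add, ← hsplit, ← add_assoc, pow_add, ← two_mul, pow_mul]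
  norm_num

lemma epsSign_eq_s4 (η : Finset V) {a b : V} (ha : a ∉ η) (hb : b ∉ η) (hab : a ≠ b) :
    epsSign (insert b η) (insert a η) = sgnIns η a * sgnIns η b := by
  have h1 : insert b η \ insert a η = {b} := by
    ext x
    simp only [Finset.mem_sdiff, Finset.mem_insert, Finset.mem_singleton]
    constructor
    · rintro ⟨hx1 | hx2, hx3⟩
      · exact hx1
      · exact absurd (Or.inr hx2) hx3
    · rintro rfl
      exact ⟨Or.inl rfl, by rintro (rfl | h) <;> [exact hab rfl; exact hb h]⟩
  have h2 : insert a η \ insert b η = {a} := by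
    ext x
    simp only [Finset.mem_sdiff, Finset.mem_insert, Finset.mem_singleton]
    constructor
    · rintro ⟨hx1 | hx2, hx3⟩
      · exact hx1
      · exact absurd (Or.inr hx2) hx3
    · rintro rfl
      exact ⟨Or.inl rfl, by rintro (rfl | h) <;> [exact hab rfl; exact ha h]⟩
  have h3 : insert b η ∩ insert a η = η := by
    ext x
    simp only [Finset.mem_inter, Finset.mem_insert]
    constructor
    · rintro ⟨rfl | hx1, rfl | hx2⟩ <;> first | assumption | (exact absurd rfl hab) | (exact absurd ‹_› (by assumption))
    · exact fun h => ⟨Or.inr h, Or.inr h⟩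
  rw [epsSign]
  rw [dif_pos (by rw [h1, h2]; exact ⟨Finset.singleton_nonempty b, Finset.singleton_nonempty a⟩)]
  simp only [h1, h2, h3, Finset.min'_singleton]
  rcases hab.lt_or_gt with h | h
  · rw [min_eq_right h.le, max_eq_left h.le]
    exact sgn_key η ha h
  · rw [min_eq_left h.le, max_eq_right h.le, mul_comm]
    exact sgn_key η hb h


lemma sgnA (η : Finset V) {a b : V} (ha : a ∉ η) (hb : b ∉ η) (hab : a ≠ b) :
    sgnIns (insert b η) a * sgnIns (insert a η) b
      = - epsSign (insert b η) (insert a η) := by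
  rw [sgnIns_insert η hb a, sgnIns_insert η ha b, epsSign_eq_s4 η ha hb hab]
  rcases hab.lt_or_gt with h | h
  · rw [if_neg h.asymm, if_pos h]; ring
  · rw [if_pos h, if_neg h.asymm]; ring

lemma sgnC (η : Finset V) {a b : V} (ha : a ∉ η) (hb : b ∉ η) (hab : a ≠ b) :
    sgnIns η a * sgnIns (insert a η) b + sgnIns η b * sgnIns (insert b η) a = 0 := by
  rw [sgnIns_insert η ha b, sgnIns_insert η hb a]
  rcases hab.lt_or_gt with h | h
  · rw [if_neg h.asymm, if_pos h]; ring
  · rw [if_pos h, if_neg h.asymm]; ring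

/-- Entry of the weighted boundary operator. -/
noncomputable def bdE (w : V → ℝ) (η ρ : Finset V) : ℝ :=
  if η ⊆ ρ then ∑ v ∈ ρ \ η, sgnIns η v * w v else 0

lemma bdE_not_subset (w : V → ℝ) {η ρ : Finset V} (h : ¬ η ⊆ ρ) : bdE w η ρ = 0 :=
  if_neg h

lemma bdE_insert (w : V → ℝ) {η : Finset V} {u : V} (hu : u ∉ η) :
    bdE w η (insert u η) = sgnIns η u * w u := by
  rw [bdE, if_pos (Finset.subset_insert _ _)]
  have h : insert u η \ η = {u} := by
    ext x
    simp only [Finset.mem_sdiff, Finset.mem_insert, Finset.mem_singleton]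
    constructor
    · rintro ⟨rfl | hx, hx2⟩
      · rfl
      · exact absurd hx hx2
    · rintro rfl; exact ⟨Or.inl rfl, hu⟩
  rw [h, Finset.sum_singleton]

/-- The weighted boundary matrix, with the higher-dimensional index restricted to `F`. -/
noncomputable def bdMat (w : V → ℝ) (F : Finset (Finset V)) (t : ℕ) :
    Matrix {η : Finset V // η.card = t} {ρ : Finset V // ρ.card = t + 1} ℝ :=
  fun η ρ => if ρ.1 ∈ F then bdE w η.1 ρ.1 else 0

lemma sum_supersets {m : ℕ} (σ : Finset V) (hσ : σ.card = m) (f : Finset V → ℝ) :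
    (∑ ρ : {ρ : Finset V // ρ.card = m + 1}, if σ ⊆ ρ.1 then f ρ.1 else 0)
      = ∑ u ∈ σᶜ, f (insert u σ) := by
  rw [← Finset.sum_subtype (Finset.univ.filter fun ρ : Finset V => ρ.card = m + 1)
    (fun ρ => by simp) (fun ρ => if σ ⊆ ρ then f ρ else 0)]
  rw [← Finset.sum_filter, Finset.filter_filter]
  have himg : (Finset.univ.filter fun ρ : Finset V => ρ.card = m + 1 ∧ σ ⊆ ρ)
      = σᶜ.image (fun u => insert u σ) := by
    ext ρ
    simp only [Finset.mem_filter, Finset.mem_univ, true_and, Finset.mem_image,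
      Finset.mem_compl]
    constructor
    · rintro ⟨hc, hsub⟩
      have hcd : (ρ \ σ).card = 1 := by
        rw [Finset.card_sdiff_of_subset hsub, hc, hσ]; omega
      obtain ⟨u, hu⟩ := Finset.card_eq_one.1 hcd
      have hum : u ∈ ρ \ σ := hu ▸ Finset.mem_singleton_self u
      refine ⟨u, (Finset.mem_sdiff.1 hum).2, ?_⟩
      refine Finset.eq_of_subset_of_card_le
        (Finset.insert_subset (Finset.mem_sdiff.1 hum).1 hsub) ?_
      rw [Finset.card_insert_of_notMem (Finset.mem_sdiff.1 hum).2, hσ, hc]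
    · rintro ⟨u, hu, rfl⟩
      exact ⟨by rw [Finset.card_insert_of_notMem hu, hσ], Finset.subset_insert _ _⟩
  rw [himg, Finset.sum_image]
  intro u hu u' hu' h
  have : u ∈ insert u' σ := (show insert u σ = insert u' σ from h) ▸ Finset.mem_insert_self u σ
  rcases Finset.mem_insert.1 this with rfl | h2
  · rfl
  · exact absurd h2 (Finset.mem_compl.1 hu)

lemma sum_subsets {m : ℕ} (σ : Finset V) (hσ : σ.card = m + 1) (f : Finset V → ℝ) :
    (∑ η : {η : Finset V // η.card = m}, if η.1 ⊆ σ then f η.1 else 0)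
      = ∑ v ∈ σ, f (σ.erase v) := by
  rw [← Finset.sum_subtype (Finset.univ.filter fun η : Finset V => η.card = m)
    (fun η => by simp) (fun η => if η ⊆ σ then f η else 0)]
  rw [← Finset.sum_filter, Finset.filter_filter]
  have himg : (Finset.univ.filter fun η : Finset V => η.card = m ∧ η ⊆ σ)
      = σ.image (fun v => σ.erase v) := by
    ext η
    simp only [Finset.mem_filter, Finset.mem_univ, true_and, Finset.mem_image]
    constructor
    · rintro ⟨hc, hsub⟩
      have hcd : (σ \ η).card = 1 := by
        rw [Finset.card_sdiff_of_subset hsub, hσ, hc]; omega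
      obtain ⟨v, hv⟩ := Finset.card_eq_one.1 hcd
      have hvm : v ∈ σ \ η := hv ▸ Finset.mem_singleton_self v
      refine ⟨v, (Finset.mem_sdiff.1 hvm).1, ?_⟩
      rw [Finset.erase_eq, ← hv, Finset.sdiff_sdiff_eq_self hsub]
    · rintro ⟨v, hv, rfl⟩
      exact ⟨by rw [Finset.card_erase_of_mem hv, hσ]; omega, Finset.erase_subset _ _⟩
  rw [himg, Finset.sum_image]
  intro v hv v' hv' h
  by_contra hne
  exact (Finset.notMem_erase v σ) ((show σ.erase v = σ.erase v' from h) ▸ Finset.mem_erase.2 ⟨hne, hv⟩)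

lemma inter_card_lt {σ τ : Finset V} (h : σ ≠ τ) (hc : σ.card = τ.card) :
    (σ ∩ τ).card < σ.card := by
  apply Finset.card_lt_card
  refine Finset.ssubset_iff_subset_ne.2 ⟨Finset.inter_subset_left, fun he => h ?_⟩
  exact Finset.eq_of_subset_of_card_le (Finset.inter_eq_left.1 he) hc.ge

lemma lapUpF_factor (F : Finset (Finset V)) (ω : V → ℝ) (t : ℕ)
    (hF : ∀ σ : Finset V, ∀ u : V, u ∉ σ → insert u σ ∈ F → σ ∈ F) :
    lapUpF F ω t = bdMat ω F t * (bdMat (fun _ => 1) F t)ᵀ := by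
  ext σ τ
  rw [Matrix.mul_apply]
  simp only [Matrix.transpose_apply, bdMat]
  have hre : ∀ ρ ∈ (Finset.univ : Finset {ρ : Finset V // ρ.card = t + 1}),
      (if ρ.1 ∈ F then bdE ω σ.1 ρ.1 else 0) *
        (if ρ.1 ∈ F then bdE (fun _ => 1) τ.1 ρ.1 else 0)
      = if σ.1 ⊆ ρ.1 then
          (if ρ.1 ∈ F then bdE ω σ.1 ρ.1 else 0) *
            (if ρ.1 ∈ F then bdE (fun _ => 1) τ.1 ρ.1 else 0)
        else 0 := by
    intro ρ _
    by_cases hsub : σ.1 ⊆ ρ.1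
    · rw [if_pos hsub]
    · rw [if_neg hsub, bdE_not_subset ω hsub, ite_self, zero_mul]
  rw [Finset.sum_congr rfl hre,
    sum_supersets σ.1 σ.2 (fun ρ => (if ρ ∈ F then bdE ω σ.1 ρ else 0) *
      (if ρ ∈ F then bdE (fun _ => 1) τ.1 ρ else 0))]
  by_cases hστ : σ = τ
  · subst hστ
    have hd : lapUpF F ω t σ σ = if σ.1 ∈ F then
        ∑ u ∈ Finset.univ.filter (fun v => v ∉ σ.1 ∧ insert v σ.1 ∈ F), ω u else 0 := by
      simp [lapUpF]
    rw [hd]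
    have hterm : ∀ u ∈ σ.1ᶜ,
        (if insert u σ.1 ∈ F then bdE ω σ.1 (insert u σ.1) else 0) *
          (if insert u σ.1 ∈ F then bdE (fun _ => 1) σ.1 (insert u σ.1) else 0)
        = if insert u σ.1 ∈ F then ω u else 0 := by
      intro u hu
      have hu' := Finset.mem_compl.1 hu
      by_cases hiF : insert u σ.1 ∈ F
      · rw [if_pos hiF, if_pos hiF, if_pos hiF, bdE_insert ω hu', bdE_insert _ hu']
        rw [show sgnIns σ.1 u * ω u * (sgnIns σ.1 u * 1)
            = (sgnIns σ.1 u * sgnIns σ.1 u) * ω u from by ring, sgnIns_sq, one_mul]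
      · rw [if_neg hiF, if_neg hiF, if_neg hiF, zero_mul]
    rw [Finset.sum_congr rfl hterm]
    have hset : Finset.univ.filter (fun v => v ∉ σ.1 ∧ insert v σ.1 ∈ F)
        = σ.1ᶜ.filter (fun u => insert u σ.1 ∈ F) := by
      ext x
      simp [Finset.mem_compl]
    by_cases hσF : σ.1 ∈ F
    · rw [if_pos hσF, hset, Finset.sum_filter]
    · rw [if_neg hσF]
      symm
      apply Finset.sum_eq_zero
      intro u hu
      exact if_neg fun h => hσF (hF σ.1 u (Finset.mem_compl.1 hu) h)
  · have hne : σ.1 ≠ τ.1 := fun h => hστ (Subtype.ext h)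
    simp only [lapUpF, if_neg hστ]
    by_cases hcard : (σ.1 ∩ τ.1).card + 1 = t
    · have hca : (τ.1 \ σ.1).card = 1 := by
        have h1 := Finset.card_sdiff_add_card_inter τ.1 σ.1
        rw [Finset.inter_comm] at h1
        have h2 := σ.2; have h3 := τ.2
        omega
      have hcb : (σ.1 \ τ.1).card = 1 := by
        have h1 := Finset.card_sdiff_add_card_inter σ.1 τ.1
        have h2 := σ.2; have h3 := τ.2
        omega
      obtain ⟨a, ha⟩ := Finset.card_eq_one.1 hca
      obtain ⟨b, hb⟩ := Finset.card_eq_one.1 hcb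
      have ham : a ∈ τ.1 \ σ.1 := ha ▸ Finset.mem_singleton_self a
      have hbm : b ∈ σ.1 \ τ.1 := hb ▸ Finset.mem_singleton_self b
      have haσ : a ∉ σ.1 := (Finset.mem_sdiff.1 ham).2
      have haτ : a ∈ τ.1 := (Finset.mem_sdiff.1 ham).1
      have hbσ : b ∈ σ.1 := (Finset.mem_sdiff.1 hbm).1
      have hbτ : b ∉ τ.1 := (Finset.mem_sdiff.1 hbm).2
      have hab : a ≠ b := fun h => haσ (h ▸ hbσ)
      have hins : insert a σ.1 = σ.1 ∪ τ.1 := by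
        rw [Finset.insert_eq, ← ha, Finset.sdiff_union_self_eq_union, Finset.union_comm]
      have hins2 : insert b τ.1 = σ.1 ∪ τ.1 := by
        rw [Finset.insert_eq, ← hb, Finset.sdiff_union_self_eq_union]
      rw [Finset.sum_eq_single_of_mem a (Finset.mem_compl.2 haσ) ?_]
      · rw [hins]
        by_cases hUF : σ.1 ∪ τ.1 ∈ F
        · have hbd1 : bdE ω σ.1 (σ.1 ∪ τ.1) = sgnIns σ.1 a * ω a := by
            rw [← hins, bdE_insert ω haσ]
          have hbd2 : bdE (fun _ => (1:ℝ)) τ.1 (σ.1 ∪ τ.1) = sgnIns τ.1 b := by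
            rw [← hins2, bdE_insert _ hbτ, mul_one]
          rw [if_pos hUF, if_pos hUF, if_pos ⟨hcard, hUF⟩, hbd1, hbd2, ha,
            Finset.prod_singleton]
          have hσ' : insert b (σ.1 ∩ τ.1) = σ.1 := by
            rw [Finset.insert_eq, ← hb, Finset.sdiff_union_inter]
          have hτ' : insert a (σ.1 ∩ τ.1) = τ.1 := by
            rw [Finset.insert_eq, ← ha, Finset.inter_comm, Finset.sdiff_union_inter]
          have haη : a ∉ σ.1 ∩ τ.1 := fun h => haσ (Finset.mem_inter.1 h).1
          have hbη : b ∉ σ.1 ∩ τ.1 := fun h => hbτ (Finset.mem_inter.1 h).2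
          have hA := sgnA (σ.1 ∩ τ.1) haη hbη hab
          rw [hσ', hτ'] at hA
          rw [show sgnIns σ.1 a * ω a * sgnIns τ.1 b
              = (sgnIns σ.1 a * sgnIns τ.1 b) * ω a from by ring, hA]
          ring
        · rw [if_neg (fun h => hUF h.2), if_neg hUF, if_neg hUF, zero_mul]
      · intro u hu hua
        have hnsub : ¬ τ.1 ⊆ insert u σ.1 := by
          intro hsub
          rcases Finset.mem_insert.1 (hsub haτ) with h | h
          · exact hua h.symm
          · exact haσ h
        rw [bdE_not_subset _ hnsub, ite_self, mul_zero]
    · rw [if_neg (fun h => hcard h.1)]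
      symm
      apply Finset.sum_eq_zero
      intro u hu
      have hnsub : ¬ τ.1 ⊆ insert u σ.1 := by
        intro hsub
        have h1 : τ.1.erase u ⊆ σ.1 ∩ τ.1 := by
          refine Finset.subset_inter (fun x hx => ?_) (Finset.erase_subset _ _)
          obtain ⟨hxu, hxτ⟩ := Finset.mem_erase.1 hx
          rcases Finset.mem_insert.1 (hsub hxτ) with h | h
          · exact absurd h hxu
          · exact h
        have h2 := Finset.pred_card_le_card_erase (s := τ.1) (a := u)
        have h3 := Finset.card_le_card h1
        have h4 : (σ.1 ∩ τ.1).card < t := by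
          have h4' := inter_card_lt hne (show σ.1.card = τ.1.card by rw [σ.2, τ.2])
          rwa [σ.2] at h4'
        have h5 := τ.2
        omega
      rw [bdE_not_subset _ hnsub, ite_self, mul_zero]

lemma bd_comp (w : V → ℝ) (F : Finset (Finset V)) (t : ℕ) :
    bdMat w Finset.univ t * bdMat w F (t + 1) = 0 := by
  ext η ρ
  rw [Matrix.mul_apply, Matrix.zero_apply]
  simp only [bdMat, Finset.mem_univ, if_true]
  have hre : ∀ σ ∈ (Finset.univ : Finset {σ : Finset V // σ.card = t + 1}),
      bdE w η.1 σ.1 * (if ρ.1 ∈ F then bdE w σ.1 ρ.1 else 0)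
        = if η.1 ⊆ σ.1 then bdE w η.1 σ.1 * (if ρ.1 ∈ F then bdE w σ.1 ρ.1 else 0)
          else 0 := by
    intro s _
    by_cases h : η.1 ⊆ s.1
    · rw [if_pos h]
    · rw [if_neg h, bdE_not_subset w h, zero_mul]
  rw [Finset.sum_congr rfl hre,
    sum_supersets η.1 η.2 (fun s => bdE w η.1 s * (if ρ.1 ∈ F then bdE w s ρ.1 else 0))]
  by_cases hρF : ρ.1 ∈ F
  swap
  · exact Finset.sum_eq_zero fun u _ => by rw [if_neg hρF, mul_zero]
  by_cases hηρ : η.1 ⊆ ρ.1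
  swap
  · refine Finset.sum_eq_zero fun u _ => ?_
    rw [if_pos hρF,
      bdE_not_subset w (fun h => hηρ ((Finset.subset_insert u η.1).trans h)), mul_zero]
  have hc2 : (ρ.1 \ η.1).card = 2 := by
    rw [Finset.card_sdiff_of_subset hηρ, ρ.2, η.2]; omega
  obtain ⟨a, b, hab, hset⟩ := Finset.card_eq_two.1 hc2
  have ham : a ∈ ρ.1 \ η.1 := by rw [hset]; exact Finset.mem_insert_self a {b}
  have hbm : b ∈ ρ.1 \ η.1 := by
    rw [hset]; exact Finset.mem_insert_of_mem (Finset.mem_singleton_self b)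
  have haη : a ∉ η.1 := (Finset.mem_sdiff.1 ham).2
  have haρ : a ∈ ρ.1 := (Finset.mem_sdiff.1 ham).1
  have hbη : b ∉ η.1 := (Finset.mem_sdiff.1 hbm).2
  have hbρ : b ∈ ρ.1 := (Finset.mem_sdiff.1 hbm).1
  rw [← Finset.sum_subset
    (show ρ.1 \ η.1 ⊆ η.1ᶜ from fun x hx => Finset.mem_compl.2 (Finset.mem_sdiff.1 hx).2)
    (fun x hx hx2 => by
      have hxρ : x ∉ ρ.1 := fun h => hx2 (Finset.mem_sdiff.2 ⟨h, Finset.mem_compl.1 hx⟩)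
      rw [if_pos hρF,
        bdE_not_subset w (fun h => hxρ (h (Finset.mem_insert_self x η.1))), mul_zero])]
  rw [hset, Finset.sum_pair hab]
  have hrwa : ρ.1 \ insert a η.1 = {b} := by
    rw [Finset.sdiff_insert, hset, Finset.erase_insert (Finset.notMem_singleton.2 hab)]
  have hrwb : ρ.1 \ insert b η.1 = {a} := by
    rw [Finset.sdiff_insert, hset, Finset.pair_comm,
      Finset.erase_insert (Finset.notMem_singleton.2 hab.symm)]
  have hbdA : bdE w (insert a η.1) ρ.1 = sgnIns (insert a η.1) b * w b := by
    rw [bdE, if_pos (Finset.insert_subset haρ hηρ), hrwa, Finset.sum_singleton]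
  have hbdB : bdE w (insert b η.1) ρ.1 = sgnIns (insert b η.1) a * w a := by
    rw [bdE, if_pos (Finset.insert_subset hbρ hηρ), hrwb, Finset.sum_singleton]
  rw [if_pos hρF, if_pos hρF, bdE_insert w haη, bdE_insert w hbη, hbdA, hbdB]
  have hC := sgnC η.1 haη hbη hab
  linear_combination (w a * w b) * hC

lemma lapUpF_skeleton (ω : V → ℝ) (t : ℕ) :
    lapUpF (skeletonFaces V (t + 2)) ω (t + 1)
      = (∑ v : V, ω v) •
          (1 : Matrix {σ : Finset V // σ.card = t + 1} {σ : Finset V // σ.card = t + 1} ℝ)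
        - @HMul.hMul _ _ _ Matrix.instHMulOfFintypeOfMulOfAddCommMonoid
            (bdMat (fun _ => 1) Finset.univ t)ᵀ (bdMat ω Finset.univ t) := by
  have hmem : ∀ ρ : Finset V, ρ ∈ skeletonFaces V (t + 2) ↔ ρ.card ≤ t + 2 := by
    intro ρ; simp [skeletonFaces]
  ext σ τ
  simp only [Matrix.sub_apply, Matrix.smul_apply, Matrix.mul_apply, Matrix.transpose_apply,
    bdMat, Finset.mem_univ, if_true, smul_eq_mul]
  have hre : ∀ η ∈ (Finset.univ : Finset {η : Finset V // η.card = t}),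
      bdE (fun _ => 1) η.1 σ.1 * bdE ω η.1 τ.1
        = if η.1 ⊆ σ.1 then bdE (fun _ => 1) η.1 σ.1 * bdE ω η.1 τ.1 else 0 := by
    intro η _
    by_cases h : η.1 ⊆ σ.1
    · rw [if_pos h]
    · rw [if_neg h, bdE_not_subset _ h, zero_mul]
  rw [Finset.sum_congr rfl hre,
    sum_subsets σ.1 σ.2 (fun η => bdE (fun _ => 1) η σ.1 * bdE ω η τ.1)]
  by_cases hστ : σ = τ
  · subst hστ
    have hd : lapUpF (skeletonFaces V (t + 2)) ω (t + 1) σ σ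
        = ∑ u ∈ Finset.univ.filter
            (fun v => v ∉ σ.1 ∧ insert v σ.1 ∈ skeletonFaces V (t + 2)), ω u := by
      simp only [lapUpF, eq_self_iff_true, if_true]
      rw [if_pos ((hmem σ.1).2 (by rw [σ.2]; omega))]
    rw [hd]
    have hfilt : Finset.univ.filter
        (fun v => v ∉ σ.1 ∧ insert v σ.1 ∈ skeletonFaces V (t + 2)) = σ.1ᶜ := by
      ext x
      simp only [Finset.mem_filter, Finset.mem_univ, true_and, Finset.mem_compl, hmem]
      exact ⟨And.left, fun hx => ⟨hx, by rw [Finset.card_insert_of_notMem hx, σ.2]⟩⟩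
    rw [hfilt]
    have hterm : ∀ v ∈ σ.1, bdE (fun _ => (1:ℝ)) (σ.1.erase v) σ.1 * bdE ω (σ.1.erase v) σ.1
        = ω v := by
      intro v hv
      have hvσ : insert v (σ.1.erase v) = σ.1 := Finset.insert_erase hv
      rw [show bdE (fun _ => (1:ℝ)) (σ.1.erase v) σ.1
          = bdE (fun _ => (1:ℝ)) (σ.1.erase v) (insert v (σ.1.erase v)) from by rw [hvσ],
        show bdE ω (σ.1.erase v) σ.1 = bdE ω (σ.1.erase v) (insert v (σ.1.erase v)) from by
          rw [hvσ],
        bdE_insert _ (Finset.notMem_erase v σ.1), bdE_insert _ (Finset.notMem_erase v σ.1)]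
      rw [mul_one, show sgnIns (σ.1.erase v) v * (sgnIns (σ.1.erase v) v * ω v)
          = (sgnIns (σ.1.erase v) v * sgnIns (σ.1.erase v) v) * ω v from by ring,
        sgnIns_sq, one_mul]
    rw [Finset.sum_congr rfl hterm, Matrix.one_apply_eq, mul_one]
    have hc := Finset.sum_compl_add_sum σ.1 ω
    linarith
  · have hne : σ.1 ≠ τ.1 := fun h => hστ (Subtype.ext h)
    rw [Matrix.one_apply_ne hστ, mul_zero]
    by_cases hcard : (σ.1 ∩ τ.1).card + 1 = t + 1
    · have hca : (τ.1 \ σ.1).card = 1 := by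
        have h1 := Finset.card_sdiff_add_card_inter τ.1 σ.1
        rw [Finset.inter_comm] at h1
        have h2 := σ.2; have h3 := τ.2
        omega
      have hcb : (σ.1 \ τ.1).card = 1 := by
        have h1 := Finset.card_sdiff_add_card_inter σ.1 τ.1
        have h2 := σ.2; have h3 := τ.2
        omega
      obtain ⟨a, ha⟩ := Finset.card_eq_one.1 hca
      obtain ⟨b, hb⟩ := Finset.card_eq_one.1 hcb
      have ham : a ∈ τ.1 \ σ.1 := ha ▸ Finset.mem_singleton_self a
      have hbm : b ∈ σ.1 \ τ.1 := hb ▸ Finset.mem_singleton_self b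
      have haσ : a ∉ σ.1 := (Finset.mem_sdiff.1 ham).2
      have haτ : a ∈ τ.1 := (Finset.mem_sdiff.1 ham).1
      have hbσ : b ∈ σ.1 := (Finset.mem_sdiff.1 hbm).1
      have hbτ : b ∉ τ.1 := (Finset.mem_sdiff.1 hbm).2
      have hab : a ≠ b := fun h => haσ (h ▸ hbσ)
      have hσ' : insert b (σ.1 ∩ τ.1) = σ.1 := by
        rw [Finset.insert_eq, ← hb, Finset.sdiff_union_inter]
      have hτ' : insert a (σ.1 ∩ τ.1) = τ.1 := by
        rw [Finset.insert_eq, ← ha, Finset.inter_comm, Finset.sdiff_union_inter]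
      have haη : a ∉ σ.1 ∩ τ.1 := fun h => haσ (Finset.mem_inter.1 h).1
      have hbη : b ∉ σ.1 ∩ τ.1 := fun h => hbτ (Finset.mem_inter.1 h).2
      have hηdef : σ.1.erase b = σ.1 ∩ τ.1 := by
        rw [Finset.erase_eq, ← hb, Finset.sdiff_sdiff_self_left]
      rw [Finset.sum_eq_single_of_mem b hbσ (fun v hv hvb => by
        have hnsub : ¬ σ.1.erase v ⊆ τ.1 := fun hsub =>
          hbτ (hsub (Finset.mem_erase.2 ⟨fun h => hvb h.symm, hbσ⟩))
        rw [bdE_not_subset ω hnsub, mul_zero])]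
      rw [hηdef]
      have hbd1 : bdE (fun _ => (1:ℝ)) (σ.1 ∩ τ.1) σ.1 = sgnIns (σ.1 ∩ τ.1) b := by
        rw [show bdE (fun _ => (1:ℝ)) (σ.1 ∩ τ.1) σ.1
            = bdE (fun _ => (1:ℝ)) (σ.1 ∩ τ.1) (insert b (σ.1 ∩ τ.1)) from by rw [hσ'],
          bdE_insert _ hbη, mul_one]
      have hbd2 : bdE ω (σ.1 ∩ τ.1) τ.1 = sgnIns (σ.1 ∩ τ.1) a * ω a := by
        rw [show bdE ω (σ.1 ∩ τ.1) τ.1 = bdE ω (σ.1 ∩ τ.1) (insert a (σ.1 ∩ τ.1)) from by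
            rw [hτ'], bdE_insert _ haη]
      rw [hbd1, hbd2]
      have hE := epsSign_eq_s4 (σ.1 ∩ τ.1) haη hbη hab
      rw [hσ', hτ'] at hE
      have hcup : σ.1 ∪ τ.1 ∈ skeletonFaces V (t + 2) := by
        rw [hmem]
        have h1 := Finset.card_union_add_card_inter σ.1 τ.1
        have h2 := σ.2; have h3 := τ.2
        omega
      have hl : lapUpF (skeletonFaces V (t + 2)) ω (t + 1) σ τ
          = -(epsSign σ.1 τ.1 * ∏ v ∈ τ.1 \ σ.1, ω v) := by
        simp only [lapUpF]
        rw [if_neg hστ, if_pos (show (σ.1 ∩ τ.1).card + 1 = t + 1 ∧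
          σ.1 ∪ τ.1 ∈ skeletonFaces V (t + 2) from ⟨hcard, hcup⟩)]
      rw [hl, ha, Finset.prod_singleton, hE]
      ring
    · have hz : ∀ v ∈ σ.1,
          bdE (fun _ => (1:ℝ)) (σ.1.erase v) σ.1 * bdE ω (σ.1.erase v) τ.1 = 0 := by
        intro v hv
        have hnsub : ¬ σ.1.erase v ⊆ τ.1 := by
          intro hsub
          have h1 : σ.1.erase v ⊆ σ.1 ∩ τ.1 :=
            Finset.subset_inter (Finset.erase_subset _ _) hsub
          have h2 := Finset.card_le_card h1
          rw [Finset.card_erase_of_mem hv, σ.2] at h2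
          have h4 : (σ.1 ∩ τ.1).card < t + 1 := by
            have h4' := inter_card_lt hne (show σ.1.card = τ.1.card by rw [σ.2, τ.2])
            rwa [σ.2] at h4'
          omega
        rw [bdE_not_subset ω hnsub, mul_zero]
      rw [Finset.sum_congr rfl hz, Finset.sum_const_zero]
      have hl : lapUpF (skeletonFaces V (t + 2)) ω (t + 1) σ τ = 0 := by
        simp only [lapUpF]
        rw [if_neg hστ, if_neg (show ¬((σ.1 ∩ τ.1).card + 1 = t + 1 ∧
          σ.1 ∪ τ.1 ∈ skeletonFaces V (t + 2)) from fun h => hcard h.1)]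
      rw [hl]
      ring

lemma matrix_commute_subsingleton {m : Type*} [Fintype m] [DecidableEq m] [Subsingleton m]
    (A B : Matrix m m ℝ) : A * B = B * A := by
  ext i j
  rw [Matrix.mul_apply, Matrix.mul_apply]
  refine Finset.sum_congr rfl fun x _ => ?_
  rw [Subsingleton.elim x i, Subsingleton.elim j i, mul_comm]

lemma commute_skel (F : Finset (Finset V)) (ω : V → ℝ) (s : ℕ)
    (hF : ∀ σ : Finset V, ∀ u : V, u ∉ σ → insert u σ ∈ F → σ ∈ F) :
    lapUpF F ω s * lapUpF (skeletonFaces V (s + 1)) ω s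
      = lapUpF (skeletonFaces V (s + 1)) ω s * lapUpF F ω s := by
  cases s with
  | zero =>
      haveI : Subsingleton {σ : Finset V // σ.card = 0} :=
        ⟨fun a b => Subtype.ext (by
          rw [Finset.card_eq_zero.1 a.2, Finset.card_eq_zero.1 b.2])⟩
      exact matrix_commute_subsingleton _ _
  | succ t =>
      rw [show t + 1 + 1 = t + 2 from rfl, lapUpF_factor F ω (t + 1) hF,
        lapUpF_skeleton ω t]
      set A := bdMat (fun _ => (1:ℝ)) (Finset.univ : Finset (Finset V)) t with hA
      set B := bdMat ω (Finset.univ : Finset (Finset V)) t with hB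
      set P := bdMat ω F (t + 1) with hP
      set Q := bdMat (fun _ => (1:ℝ)) F (t + 1) with hQ
      have h1 : (P * Qᵀ) * (Aᵀ * B) = 0 := by
        have hQA : Qᵀ * Aᵀ = 0 := by
          rw [← Matrix.transpose_mul, hA, hQ, bd_comp (fun _ => (1:ℝ)) F t,
            Matrix.transpose_zero]
        rw [Matrix.mul_assoc, ← Matrix.mul_assoc Qᵀ Aᵀ B, hQA, Matrix.zero_mul,
          Matrix.mul_zero]
      have h2 : (Aᵀ * B) * (P * Qᵀ) = 0 := by
        have hBP : B * P = 0 := bd_comp ω F t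
        rw [Matrix.mul_assoc, ← Matrix.mul_assoc B P Qᵀ, hBP, Matrix.zero_mul,
          Matrix.mul_zero]
      rw [mul_sub, sub_mul, h1, h2, mul_smul_comm, smul_mul_assoc, mul_one, one_mul]

lemma mem_complFaces_self {X : AbstractSC V} {ρ : Finset V} {m : ℕ} (hρ : ρ.card = m) :
    ρ ∈ complFaces X m ↔ ρ ∉ X.faces := by
  simp only [complFaces, Finset.mem_filter, Finset.mem_powerset]
  constructor
  · rintro ⟨-, ρ', hc, hn, hsub⟩
    rwa [Finset.eq_of_subset_of_card_le hsub (by rw [hρ, hc])]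
  · intro h
    exact ⟨Finset.subset_univ ρ, ρ, hρ, h, Finset.Subset.refl ρ⟩

lemma mem_complFaces_sub {X : AbstractSC V} {σ : Finset V} {s : ℕ} (hσ : σ.card = s) :
    σ ∈ complFaces X (s + 1) ↔ ∃ u ∉ σ, insert u σ ∉ X.faces := by
  simp only [complFaces, Finset.mem_filter, Finset.mem_powerset]
  constructor
  · rintro ⟨-, ρ, hc, hn, hsub⟩
    have hcd : (ρ \ σ).card = 1 := by rw [Finset.card_sdiff_of_subset hsub, hc, hσ]; omega
    obtain ⟨u, hu⟩ := Finset.card_eq_one.1 hcd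
    have hum : u ∈ ρ \ σ := hu ▸ Finset.mem_singleton_self u
    have huσ : u ∉ σ := (Finset.mem_sdiff.1 hum).2
    have heq : insert u σ = ρ := Finset.eq_of_subset_of_card_le
      (Finset.insert_subset (Finset.mem_sdiff.1 hum).1 hsub)
      (by rw [Finset.card_insert_of_notMem huσ, hσ, hc])
    exact ⟨u, huσ, heq ▸ hn⟩
  · rintro ⟨u, hu, hn⟩
    exact ⟨Finset.subset_univ σ, insert u σ,
      by rw [Finset.card_insert_of_notMem hu, hσ], hn, Finset.subset_insert u σ⟩

lemma complFaces_down {X : AbstractSC V} {m : ℕ} :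
    ∀ σ : Finset V, ∀ u : V, u ∉ σ → insert u σ ∈ complFaces X m → σ ∈ complFaces X m := by
  intro σ u hu h
  simp only [complFaces, Finset.mem_filter, Finset.mem_powerset] at h ⊢
  obtain ⟨-, ρ, hc, hn, hsub⟩ := h
  exact ⟨Finset.subset_univ σ, ρ, hc, hn, (Finset.subset_insert u σ).trans hsub⟩

lemma lap_sum (X : AbstractSC V) (ω : V → ℝ) (s : ℕ) (hs : s ≤ X.faces.sup Finset.card) :
    lapUpF X.faces ω s + lapUpF (complFaces X (s + 1)) ω s
      = lapUpF (skeletonFaces V (s + 1)) ω s := by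
  have hmem : ∀ ρ : Finset V, ρ ∈ skeletonFaces V (s + 1) ↔ ρ.card ≤ s + 1 := by
    intro ρ; simp [skeletonFaces]
  ext σ τ
  rw [Matrix.add_apply]
  by_cases hστ : σ = τ
  · subst hστ
    simp only [lapUpF, eq_self_iff_true, if_true]
    have hskelσ : σ.1 ∈ skeletonFaces V (s + 1) := (hmem _).2 (by rw [σ.2]; omega)
    rw [if_pos hskelσ]
    have hfiltS : Finset.univ.filter (fun v => v ∉ σ.1 ∧ insert v σ.1 ∈ skeletonFaces V (s + 1))
        = Finset.univ.filter (fun v => v ∉ σ.1) := by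
      ext x
      simp only [Finset.mem_filter, Finset.mem_univ, true_and, hmem]
      exact ⟨And.left, fun hx => ⟨hx, by rw [Finset.card_insert_of_notMem hx, σ.2]⟩⟩
    have hfiltC : Finset.univ.filter
          (fun v => v ∉ σ.1 ∧ insert v σ.1 ∈ complFaces X (s + 1))
        = Finset.univ.filter (fun v => v ∉ σ.1 ∧ insert v σ.1 ∉ X.faces) := by
      ext x
      simp only [Finset.mem_filter, Finset.mem_univ, true_and]
      constructor
      · rintro ⟨hx, hx2⟩
        exact ⟨hx, (mem_complFaces_self (by rw [Finset.card_insert_of_notMem hx, σ.2])).1 hx2⟩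
      · rintro ⟨hx, hx2⟩
        exact ⟨hx, (mem_complFaces_self (by rw [Finset.card_insert_of_notMem hx, σ.2])).2 hx2⟩
    rw [hfiltS, hfiltC]
    by_cases hσX : σ.1 ∈ X.faces
    · rw [if_pos hσX]
      by_cases hσC : σ.1 ∈ complFaces X (s + 1)
      · rw [if_pos hσC,
          show Finset.univ.filter (fun v => v ∉ σ.1 ∧ insert v σ.1 ∈ X.faces)
            = (Finset.univ.filter (fun v => v ∉ σ.1)).filter
                (fun v => insert v σ.1 ∈ X.faces) from by rw [Finset.filter_filter],
          show Finset.univ.filter (fun v => v ∉ σ.1 ∧ insert v σ.1 ∉ X.faces)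
            = (Finset.univ.filter (fun v => v ∉ σ.1)).filter
                (fun v => ¬ insert v σ.1 ∈ X.faces) from by rw [Finset.filter_filter]]
        exact Finset.sum_filter_add_sum_filter_not _ _ ω
      · rw [if_neg hσC, add_zero]
        have hall : ∀ v, v ∉ σ.1 → insert v σ.1 ∈ X.faces := by
          intro v hv
          by_contra hn
          exact hσC ((mem_complFaces_sub σ.2).2 ⟨v, hv, hn⟩)
        refine Finset.sum_congr ?_ (fun _ _ => rfl)
        ext x
        simp only [Finset.mem_filter, Finset.mem_univ, true_and]
        exact ⟨And.left, fun hx => ⟨hx, hall x hx⟩⟩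
    · rw [if_neg hσX, zero_add]
      have hins_not : ∀ v, insert v σ.1 ∉ X.faces :=
        fun v h => hσX (X.down_closed h (Finset.subset_insert v σ.1))
      have hσC : σ.1 ∈ complFaces X (s + 1) := by
        have hne : σ.1ᶜ.Nonempty := by
          by_contra h
          rw [Finset.not_nonempty_iff_eq_empty, Finset.compl_eq_empty_iff] at h
          obtain ⟨τm, hτm, hτc⟩ :=
            Finset.exists_mem_eq_sup X.faces ⟨∅, X.empty_mem⟩ Finset.card
          have h1 : s ≤ τm.card := hτc ▸ hs
          have h2 : Fintype.card V = s := by rw [← Finset.card_univ, ← h, σ.2]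
          have h3 : τm = Finset.univ :=
            Finset.eq_univ_of_card τm (le_antisymm (Finset.card_le_univ τm) (h2 ▸ h1))
          exact hσX (h ▸ h3 ▸ hτm)
        obtain ⟨u, hu⟩ := hne
        exact (mem_complFaces_sub σ.2).2 ⟨u, Finset.mem_compl.1 hu, hins_not u⟩
      rw [if_pos hσC]
      refine Finset.sum_congr ?_ (fun _ _ => rfl)
      ext x
      simp only [Finset.mem_filter, Finset.mem_univ, true_and]
      exact ⟨And.left, fun hx => ⟨hx, hins_not x⟩⟩
  · simp only [lapUpF]
    rw [if_neg hστ, if_neg hστ, if_neg hστ]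
    by_cases hcard : (σ.1 ∩ τ.1).card + 1 = s
    · have hcup_card : (σ.1 ∪ τ.1).card = s + 1 := by
        have h1 := Finset.card_union_add_card_inter σ.1 τ.1
        have h2 := σ.2; have h3 := τ.2
        omega
      have hskel : σ.1 ∪ τ.1 ∈ skeletonFaces V (s + 1) := (hmem _).2 (le_of_eq hcup_card)
      have hCiff := mem_complFaces_self (X := X) hcup_card
      rw [if_pos (show (σ.1 ∩ τ.1).card + 1 = s ∧ σ.1 ∪ τ.1 ∈ skeletonFaces V (s + 1)
        from ⟨hcard, hskel⟩)]
      by_cases hU : σ.1 ∪ τ.1 ∈ X.faces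
      · rw [if_pos (show _ ∧ σ.1 ∪ τ.1 ∈ X.faces from ⟨hcard, hU⟩),
          if_neg (show ¬((σ.1 ∩ τ.1).card + 1 = s ∧ σ.1 ∪ τ.1 ∈ complFaces X (s + 1))
            from fun h => (hCiff.1 h.2) hU), add_zero]
      · rw [if_neg (show ¬((σ.1 ∩ τ.1).card + 1 = s ∧ σ.1 ∪ τ.1 ∈ X.faces)
            from fun h => hU h.2),
          if_pos (show (σ.1 ∩ τ.1).card + 1 = s ∧ σ.1 ∪ τ.1 ∈ complFaces X (s + 1)
            from ⟨hcard, hCiff.2 hU⟩), zero_add]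
    · rw [if_neg (show ¬((σ.1 ∩ τ.1).card + 1 = s ∧ σ.1 ∪ τ.1 ∈ X.faces)
          from fun h => hcard h.1),
        if_neg (show ¬((σ.1 ∩ τ.1).card + 1 = s ∧ σ.1 ∪ τ.1 ∈ complFaces X (s + 1))
          from fun h => hcard h.1),
        if_neg (show ¬((σ.1 ∩ τ.1).card + 1 = s ∧ σ.1 ∪ τ.1 ∈ skeletonFaces V (s + 1))
          from fun h => hcard h.1), add_zero]
/-- As matrices indexed by all `(k+1)`-subsets of `V`,
`L_k^{ω,up}(X) + L_k^{ω,up}(X_{k+1}^c) = L_k^{ω,up}(Δ^{(k+1)})`, and the three matrices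
pairwise commute. -/
theorem statement4 {V : Type*} [Fintype V] [LinearOrder V]
    (X : AbstractSC V) (ω : V → ℝ) (hω : ∀ v, 0 < ω v)
    (n : ℕ) (hn : Fintype.card V = n)
    (hvert : ∀ v : V, ({v} : Finset V) ∈ X.faces)
    (k : ℤ) (hk : -1 ≤ k) (hk' : k ≤ X.dimension) :
    lapUpF X.faces ω (k + 1).toNat +
        lapUpF (complFaces X ((k + 1).toNat + 1)) ω (k + 1).toNat =
      lapUpF (skeletonFaces V ((k + 1).toNat + 1)) ω (k + 1).toNat ∧
    Commute (lapUpF X.faces ω (k + 1).toNat)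
        (lapUpF (complFaces X ((k + 1).toNat + 1)) ω (k + 1).toNat) ∧
    Commute (lapUpF X.faces ω (k + 1).toNat)
        (lapUpF (skeletonFaces V ((k + 1).toNat + 1)) ω (k + 1).toNat) ∧
    Commute (lapUpF (complFaces X ((k + 1).toNat + 1)) ω (k + 1).toNat)
        (lapUpF (skeletonFaces V ((k + 1).toNat + 1)) ω (k + 1).toNat) := by
  have hs : (k + 1).toNat ≤ X.faces.sup Finset.card := by
    have h1 : k ≤ ((X.faces.sup Finset.card : ℕ) : ℤ) - 1 := hk'
    omega
  have hsum := lap_sum X ω (k + 1).toNat hs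
  have hXdown : ∀ σ : Finset V, ∀ u : V, u ∉ σ → insert u σ ∈ X.faces → σ ∈ X.faces :=
    fun σ u _ h => X.down_closed h (Finset.subset_insert u σ)
  have hXS : Commute (lapUpF X.faces ω (k + 1).toNat)
      (lapUpF (skeletonFaces V ((k + 1).toNat + 1)) ω (k + 1).toNat) :=
    commute_skel _ ω _ hXdown
  have hCS : Commute (lapUpF (complFaces X ((k + 1).toNat + 1)) ω (k + 1).toNat)
      (lapUpF (skeletonFaces V ((k + 1).toNat + 1)) ω (k + 1).toNat) :=
    commute_skel _ ω _ (complFaces_down (X := X))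
  have hXC : Commute (lapUpF X.faces ω (k + 1).toNat)
      (lapUpF (complFaces X ((k + 1).toNat + 1)) ω (k + 1).toNat) := by
    have hC := eq_sub_of_add_eq' hsum
    rw [hC]
    exact hXS.sub_right (Commute.refl _)
  exact ⟨hsum, hXC, hXS, hCS⟩
end

section
/- Let X be an abstract simplicial complex on a finite vertex set V with h(X) = d and vertex weight function ω. Then for every −1 ≤ k ≤ dim(X), the smallest eigenvalue of the vertex-weighted k-dimensional Laplacian satisfies λ_1^↑(L_k^ω(X)) ≥ (d+1)·m_k − d·Σ_{v∈V} ω(v), where m_k = min_{σ∈X(k)} Σ_{v ∈ σ ∪ lk_X(σ)} ω(v). -/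
open Finset

variable {V : Type*} [Fintype V] [LinearOrder V]

section Aux

open Polynomial

lemma my_charpoly_conj {m R : Type*} [Fintype m] [DecidableEq m] [CommRing R]
    (P Q A : Matrix m m R) (h : P * Q = 1) :
    (P * A * Q).charpoly = A.charpoly := by
  have hc : (C : R →+* R[X]).mapMatrix P * Matrix.scalar m (X : R[X]) =
      Matrix.scalar m (X : R[X]) * (C : R →+* R[X]).mapMatrix P := by
    ext i j : 2
    simp only [Matrix.scalar_apply, Matrix.mul_diagonal, Matrix.diagonal_mul]
    ring
  have expand : (C : R →+* R[X]).mapMatrix (P * A * Q) =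
      (C : R →+* R[X]).mapMatrix P * (C : R →+* R[X]).mapMatrix A *
        (C : R →+* R[X]).mapMatrix Q := by
    simp [map_mul]
  have key : Matrix.charmatrix (P * A * Q) =
      (C : R →+* R[X]).mapMatrix P * Matrix.charmatrix A * (C : R →+* R[X]).mapMatrix Q := by
    unfold Matrix.charmatrix
    rw [expand, mul_sub, sub_mul]
    congr 1
    rw [hc, mul_assoc, ← map_mul, h, map_one, mul_one]
  have hdet : ((C : R →+* R[X]).mapMatrix P).det * ((C : R →+* R[X]).mapMatrix Q).det = 1 := by
    rw [← Matrix.det_mul, ← map_mul, h, map_one, Matrix.det_one]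
  rw [Matrix.charpoly, Matrix.charpoly, key, Matrix.det_mul, Matrix.det_mul]
  calc ((C : R →+* R[X]).mapMatrix P).det * (Matrix.charmatrix A).det *
        ((C : R →+* R[X]).mapMatrix Q).det
      = (Matrix.charmatrix A).det * (((C : R →+* R[X]).mapMatrix P).det *
        ((C : R →+* R[X]).mapMatrix Q).det) := by ring
    _ = (Matrix.charmatrix A).det := by rw [hdet, mul_one]

lemma my_charpoly_diag {m : Type*} [Fintype m] [DecidableEq m] (f : m → ℝ) :
    (Matrix.diagonal f).charpoly = ∏ i, (X - C (f i)) := by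
  unfold Matrix.charpoly
  have : Matrix.charmatrix (Matrix.diagonal f) = Matrix.diagonal (fun i => X - C (f i)) := by
    ext i j
    by_cases h : i = j
    · subst h; simp
    · simp [Matrix.charmatrix_apply_ne _ _ _ h, Matrix.diagonal_apply_ne _ h]
  rw [this, Matrix.det_diagonal]

lemma my_roots_hermitian {m : Type*} [Fintype m] [DecidableEq m] {A : Matrix m m ℝ}
    (hA : A.IsHermitian) : A.charpoly.roots = Multiset.map hA.eigenvalues univ.val := by
  have h1 : A.charpoly = (Matrix.diagonal hA.eigenvalues).charpoly := by
    conv_lhs => rw [hA.spectral_theorem]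
    have hu : (hA.eigenvectorUnitary : Matrix m m ℝ) *
        (star hA.eigenvectorUnitary : Matrix m m ℝ) = 1 :=
      Matrix.mem_unitaryGroup_iff.mp hA.eigenvectorUnitary.2
    rw [Unitary.conjStarAlgAut_apply]
    rw [my_charpoly_conj (hA.eigenvectorUnitary : Matrix m m ℝ)
      (star hA.eigenvectorUnitary : Matrix m m ℝ)
      (Matrix.diagonal (RCLike.ofReal ∘ hA.eigenvalues)) hu]
    congr 1
  rw [h1, my_charpoly_diag, Polynomial.roots_prod _ _ (Finset.prod_ne_zero_iff.mpr
      fun i _ => X_sub_C_ne_zero _)]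
  simp [roots_X_sub_C, Multiset.bind_singleton]

lemma my_eig_of_root {m : Type*} [Fintype m] [DecidableEq m] (A : Matrix m m ℝ) {μ : ℝ}
    (h : μ ∈ A.charpoly.roots) : Module.End.HasEigenvalue (Matrix.toLin' A) μ := by
  have hroot : eval μ A.charpoly = 0 :=
    (Polynomial.mem_roots (A.charpoly_monic.ne_zero)).1 h
  have hdet : (Matrix.scalar m μ - A).det = 0 := by
    have h2 : ((Polynomial.evalRingHom μ).mapMatrix (Matrix.charmatrix A)) =
        Matrix.scalar m μ - A := by
      ext i j : 2
      by_cases hij : i = j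
      · subst hij
        simp [Matrix.charmatrix_apply_eq, Matrix.scalar_apply]
      · simp [Matrix.charmatrix_apply_ne _ _ _ hij, Matrix.scalar_apply,
          Matrix.diagonal_apply_ne _ hij]
    have h3 := RingHom.map_det (Polynomial.evalRingHom μ) (Matrix.charmatrix A)
    rw [h2] at h3
    rw [← h3]
    simpa [Matrix.charpoly] using hroot
  have hker : ⊥ < LinearMap.ker (Matrix.toLin' (Matrix.scalar m μ - A)) := by
    apply LinearMap.bot_lt_ker_of_det_eq_zero
    rwa [LinearMap.det_toLin']
  obtain ⟨x, hx, hx0⟩ := SetLike.exists_of_lt hker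
  have hx0' : x ≠ 0 := by simpa using hx0
  have hmul : μ • x - A.mulVec x = 0 := by
    simpa [Matrix.toLin'_apply] using hx
  have heq : Matrix.toLin' A x = μ • x := by
    rw [Matrix.toLin'_apply]
    exact (sub_eq_zero.mp hmul).symm
  exact Module.End.hasEigenvalue_of_hasEigenvector ⟨Module.End.mem_eigenspace_iff.2 heq, hx0'⟩


lemma minOver_le' {α : Type*} (s : Finset α) (f : α → ℝ) {a : α} (ha : a ∈ s) :
    minOver s f ≤ f a := by
  obtain ⟨b, hb⟩ := Finset.min_of_mem (Finset.mem_image_of_mem f ha)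
  have h1 : (s.image f).min ≤ (f a : WithTop ℝ) := Finset.min_le (Finset.mem_image_of_mem f ha)
  rw [hb] at h1
  rw [minOver, hb]
  show b ≤ f a
  exact_mod_cast h1

variable {V : Type*} [Fintype V] [LinearOrder V]

lemma abs_epsSign (σ τ : Finset V) : |epsSign σ τ| = 1 := by
  unfold epsSign
  split_ifs <;> simp [abs_pow]

lemma epsSign_comm (σ τ : Finset V) : epsSign σ τ = epsSign τ σ := by
  unfold epsSign
  by_cases h1 : (σ \ τ).Nonempty <;> by_cases h2 : (τ \ σ).Nonempty
  · rw [dif_pos ⟨h1, h2⟩, dif_pos ⟨h2, h1⟩]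
    congr 2
    rw [Finset.inter_comm]
    apply Finset.filter_congr
    intro w _
    rw [min_comm, max_comm]
  · rw [dif_neg (by tauto), dif_neg (by tauto)]
  · rw [dif_neg (by tauto), dif_neg (by tauto)]
  · rw [dif_neg (by tauto), dif_neg (by tauto)]

lemma exists_missing (X : AbstractSC V) {η : Finset V} (hη : η ∉ X.faces) :
    ∃ ρ, ρ ⊆ η ∧ ρ ∉ X.faces ∧ ∀ τ ⊂ ρ, τ ∈ X.faces := by
  classical
  obtain ⟨ρ, hρ, hmin⟩ := Finset.exists_min_image
    (η.powerset.filter (· ∉ X.faces)) Finset.card ⟨η, by simp [hη]⟩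
  rw [Finset.mem_filter, Finset.mem_powerset] at hρ
  refine ⟨ρ, hρ.1, hρ.2, fun τ hτ => ?_⟩
  by_contra hτf
  have hτmem : τ ∈ η.powerset.filter (· ∉ X.faces) :=
    Finset.mem_filter.2 ⟨Finset.mem_powerset.2 (hτ.subset.trans hρ.1), hτf⟩
  exact absurd (Finset.card_lt_card hτ) (not_lt.2 (hmin τ hτmem))

lemma offdiag_bound (X : AbstractSC V) (ω : V → ℝ) (hω : ∀ v, 0 < ω v) (d s : ℕ)
    (hmiss : ∀ ρ : Finset V, ρ ∉ X.faces → (∀ τ ⊂ ρ, τ ∈ X.faces) → ρ.card ≤ d + 1)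
    (σ : X.Face s) :
    ∑ τ ∈ univ.erase σ, ‖lapFull X ω s σ τ‖ ≤
      (d : ℝ) * ∑ v ∈ univ \ (σ.1 ∪ X.link σ.1), ω v := by
  classical
  set B : Finset V := univ \ (σ.1 ∪ X.link σ.1) with hB
  have hBsum : (0:ℝ) ≤ ∑ v ∈ B, ω v := Finset.sum_nonneg fun v _ => (hω v).le
  set S : Finset (X.Face s) := (univ.erase σ).filter
    (fun τ => (σ.1 ∩ τ.1).card + 1 = s ∧ σ.1 ∪ τ.1 ∉ X.faces) with hS
  have hstep1 : ∑ τ ∈ univ.erase σ, ‖lapFull X ω s σ τ‖ = ∑ τ ∈ S, ‖lapFull X ω s σ τ‖ := by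
    rw [hS]
    refine (Finset.sum_filter_of_ne ?_).symm
    intro τ hτ hne
    by_contra hc
    have hτσ : ¬ (σ = τ) := fun h => (Finset.mem_erase.1 hτ).1 h.symm
    apply hne
    unfold lapFull
    rw [if_neg hτσ, if_neg hc, norm_zero]
  -- basic facts about members of S
  have hfacts : ∀ τ : X.Face s, τ ∈ S → ∃ v : V, τ.1 \ σ.1 = {v} ∧ v ∉ σ.1 ∧
      insert v σ.1 ∉ X.faces ∧ σ.1 ∪ τ.1 = insert v σ.1 := by
    intro τ hτ
    rw [hS, Finset.mem_filter] at hτ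
    obtain ⟨hτe, hcard, hnf⟩ := hτ
    have h1 : (τ.1 \ σ.1).card + (τ.1 ∩ σ.1).card = τ.1.card :=
      Finset.card_sdiff_add_card_inter _ _
    rw [Finset.inter_comm] at h1
    have h2 : (τ.1 \ σ.1).card = 1 := by
      have := τ.2.2
      omega
    obtain ⟨v, hv⟩ := Finset.card_eq_one.1 h2
    have hvτ : v ∈ τ.1 \ σ.1 := hv ▸ Finset.mem_singleton_self v
    have hvσ : v ∉ σ.1 := (Finset.mem_sdiff.1 hvτ).2
    have hun : σ.1 ∪ τ.1 = insert v σ.1 := by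
      rw [← Finset.union_sdiff_self_eq_union, hv]
      ext a
      simp [or_comm]
    refine ⟨v, hv, hvσ, ?_, hun⟩
    rw [← hun]; exact hnf
  by_cases hSe : S = ∅
  · rw [hstep1, hSe, Finset.sum_empty]
    exact mul_nonneg (Nat.cast_nonneg d) hBsum
  obtain ⟨τ₀, hτ₀⟩ := Finset.nonempty_of_ne_empty hSe
  obtain ⟨v₀, -, -, -, -⟩ := hfacts τ₀ hτ₀
  haveI : Nonempty V := ⟨v₀⟩
  set g : X.Face s → V := fun τ =>
    if h : (τ.1 \ σ.1).Nonempty then (τ.1 \ σ.1).min' h else Classical.arbitrary V with hg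
  have hgval : ∀ τ ∈ S, τ.1 \ σ.1 = {g τ} ∧ g τ ∉ σ.1 ∧ insert (g τ) σ.1 ∉ X.faces ∧
      σ.1 ∪ τ.1 = insert (g τ) σ.1 := by
    intro τ hτ
    obtain ⟨v, hv, h1, h2, h3⟩ := hfacts τ hτ
    have hne : (τ.1 \ σ.1).Nonempty := ⟨v, hv ▸ Finset.mem_singleton_self v⟩
    have : g τ = v := by
      rw [hg]
      simp only [dif_pos hne, hv, Finset.min'_singleton]
      simp
    rw [this]
    exact ⟨hv, h1, h2, h3⟩
  have hmapsto : ∀ τ ∈ S, g τ ∈ B := by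
    intro τ hτ
    obtain ⟨-, h1, h2, -⟩ := hgval τ hτ
    rw [hB, Finset.mem_sdiff]
    refine ⟨Finset.mem_univ _, ?_⟩
    rw [Finset.mem_union]
    rintro (h | h)
    · exact h1 h
    · rw [AbstractSC.link, Finset.mem_filter] at h
      exact h2 h.2.2
  have hstep2 : ∑ τ ∈ S, ‖lapFull X ω s σ τ‖ = ∑ τ ∈ S, ω (g τ) := by
    refine Finset.sum_congr rfl fun τ hτ => ?_
    obtain ⟨hv, -, -, -⟩ := hgval τ hτ
    rw [hS, Finset.mem_filter] at hτ
    have hτσ : ¬ (σ = τ) := fun h => (Finset.mem_erase.1 hτ.1).1 h.symm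
    unfold lapFull
    rw [if_neg hτσ, if_pos hτ.2, hv, Finset.prod_singleton, Real.norm_eq_abs, abs_mul,
      abs_epsSign, one_mul, abs_of_pos (hω _)]
  have hstep3 : ∑ τ ∈ S, ω (g τ) =
      ∑ v ∈ B, ∑ τ ∈ S.filter (fun τ => g τ = v), ω (g τ) :=
    (Finset.sum_fiberwise_of_maps_to hmapsto _).symm
  have hfibcard : ∀ v ∈ B, (S.filter (fun τ => g τ = v)).card ≤ d := by
    intro v hv
    rw [hB, Finset.mem_sdiff, Finset.mem_union] at hv
    push_neg at hv
    obtain ⟨-, hv1, hv2⟩ := hv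
    have hv3 : insert v σ.1 ∉ X.faces := by
      intro hmem
      exact hv2 (Finset.mem_filter.2 ⟨Finset.mem_univ _, hv1, hmem⟩)
    obtain ⟨ρ, hρsub, hρnf, hρmin⟩ := exists_missing X hv3
    have hρd : ρ.card ≤ d + 1 := hmiss ρ hρnf hρmin
    have hvρ : v ∈ ρ := by
      by_contra hvρ
      apply hρnf
      apply X.down_closed σ.2.1
      intro a ha
      have := hρsub ha
      rw [Finset.mem_insert] at this
      rcases this with h | h
      · exact absurd (h ▸ ha) hvρ
      · exact h
    set i : X.Face s → V := fun τ =>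
      if h : (σ.1 \ τ.1).Nonempty then (σ.1 \ τ.1).min' h else v with hi
    have hival : ∀ τ ∈ S.filter (fun τ => g τ = v), σ.1 \ τ.1 = {i τ} ∧
        τ.1 = insert v (σ.1.erase (i τ)) ∧ i τ ∈ ρ.erase v := by
      intro τ hτf
      rw [Finset.mem_filter] at hτf
      obtain ⟨hτS, hgv⟩ := hτf
      obtain ⟨hsd, -, -, -⟩ := hgval τ hτS
      rw [hgv] at hsd
      have hvτ : v ∈ τ.1 := (Finset.mem_sdiff.1 (hsd ▸ Finset.mem_singleton_self v)).1
      rw [hS, Finset.mem_filter] at hτS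
      have hcard : (σ.1 ∩ τ.1).card + 1 = s := hτS.2.1
      have h1 : (σ.1 \ τ.1).card + (σ.1 ∩ τ.1).card = σ.1.card :=
        Finset.card_sdiff_add_card_inter _ _
      have h2 : (σ.1 \ τ.1).card = 1 := by
        have := σ.2.2
        omega
      obtain ⟨u, hu⟩ := Finset.card_eq_one.1 h2
      have hune : (σ.1 \ τ.1).Nonempty := ⟨u, hu ▸ Finset.mem_singleton_self u⟩
      have hiu : i τ = u := by
        rw [hi]
        simp only [dif_pos hune, hu, Finset.min'_singleton]
        simp
      have huστ : u ∈ σ.1 \ τ.1 := hu ▸ Finset.mem_singleton_self u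
      have huσ : u ∈ σ.1 := (Finset.mem_sdiff.1 huστ).1
      have huτ : u ∉ τ.1 := (Finset.mem_sdiff.1 huστ).2
      have hτeq : τ.1 = insert v (σ.1.erase u) := by
        apply Finset.Subset.antisymm
        · intro x hx
          rw [Finset.mem_insert]
          by_cases hxv : x = v
          · exact Or.inl hxv
          · right
            rw [Finset.mem_erase]
            have hxσ : x ∈ σ.1 := by
              by_contra hxσ
              have : x ∈ τ.1 \ σ.1 := Finset.mem_sdiff.2 ⟨hx, hxσ⟩
              rw [hsd, Finset.mem_singleton] at this
              exact hxv this
            exact ⟨fun h => huτ (h ▸ hx), hxσ⟩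
        · intro x hx
          rw [Finset.mem_insert] at hx
          rcases hx with h | h
          · exact h ▸ hvτ
          · rw [Finset.mem_erase] at h
            by_contra hxτ
            have : x ∈ σ.1 \ τ.1 := Finset.mem_sdiff.2 ⟨h.2, hxτ⟩
            rw [hu, Finset.mem_singleton] at this
            exact h.1 this
      have huρ : u ∈ ρ := by
        by_contra huρ
        apply hρnf
        apply X.down_closed τ.2.1
        intro a ha
        have hains := hρsub ha
        rw [Finset.mem_insert] at hains
        rw [hτeq]
        rcases hains with h | h
        · exact h ▸ Finset.mem_insert_self _ _
        · refine Finset.mem_insert_of_mem (Finset.mem_erase.2 ⟨fun he => huρ (he ▸ ha), h⟩)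
      have huv : u ≠ v := fun h => hv1 (h ▸ huσ)
      rw [hiu]
      exact ⟨hu, hτeq, Finset.mem_erase.2 ⟨huv, huρ⟩⟩
    have hinj : Set.InjOn i (S.filter (fun τ => g τ = v)) := by
      intro τ₁ h₁ τ₂ h₂ heq
      obtain ⟨-, he₁, -⟩ := hival τ₁ h₁
      obtain ⟨-, he₂, -⟩ := hival τ₂ h₂
      apply Subtype.ext
      rw [he₁, he₂, heq]
    have hle := Finset.card_le_card_of_injOn i (fun τ hτ => (hival τ hτ).2.2) hinj
    have : (ρ.erase v).card = ρ.card - 1 := Finset.card_erase_of_mem hvρ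
    have hρpos : 1 ≤ ρ.card := Finset.card_pos.2 ⟨v, hvρ⟩
    omega
  rw [hstep1, hstep2, hstep3, Finset.mul_sum]
  refine Finset.sum_le_sum fun v hv => ?_
  have hconst : ∑ τ ∈ S.filter (fun τ => g τ = v), ω (g τ) =
      (S.filter (fun τ => g τ = v)).card • ω v := by
    rw [← Finset.sum_const]
    refine Finset.sum_congr rfl fun τ hτ => ?_
    rw [(Finset.mem_filter.1 hτ).2]
  rw [hconst, nsmul_eq_mul]
  exact mul_le_mul_of_nonneg_right (Nat.cast_le.2 (hfibcard v hv)) (hω v).le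

end Aux

/-- Lower bound for the vertex-weighted spectral gap:
`λ_1^↑(L_k^ω(X)) ≥ (d+1)·m_k - d·Σ_{v∈V} ω(v)`, where `d = h(X)` and
`m_k = min_{σ∈X(k)} Σ_{v∈σ∪lk_X(σ)} ω(v)`. -/
theorem statement7 {V : Type*} [Fintype V] [LinearOrder V]
    (X : AbstractSC V) (ω : V → ℝ) (hω : ∀ v, 0 < ω v)
    (hvert : ∀ v : V, ({v} : Finset V) ∈ X.faces)
    (d : ℕ) (hd : X.hdim = (d : ℤ))
    (k : ℤ) (hk : -1 ≤ k) (hk' : k ≤ X.dimension) :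
    ((d : ℝ) + 1) * minOver (X.facesOfCard (k + 1).toNat)
          (fun σ => ∑ v ∈ σ ∪ X.link σ, ω v) -
        (d : ℝ) * ∑ v, ω v ≤
      eigAsc (lapZ X ω k) 1 := by
  classical
  set s : ℕ := (k + 1).toNat with hs
  set L : Matrix (X.Face s) (X.Face s) ℝ := lapFull X ω s with hLdef
  have hLZ : lapZ X ω k = L := rfl
  -- the index type is nonempty
  have hfaces_ne : X.faces.Nonempty := ⟨∅, X.empty_mem⟩
  obtain ⟨σmax, hσmax, hcardmax⟩ := Finset.exists_mem_eq_sup X.faces hfaces_ne Finset.card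
  have hsle : s ≤ σmax.card := by
    have h1 : k + 1 ≤ ((X.faces.sup Finset.card : ℕ) : ℤ) := by
      unfold AbstractSC.dimension at hk'
      omega
    rw [hcardmax] at h1
    omega
  obtain ⟨τ0, hτ0sub, hτ0card⟩ := Finset.exists_subset_card_eq hsle
  haveI : Nonempty (X.Face s) := ⟨⟨τ0, X.down_closed hσmax hτ0sub, hτ0card⟩⟩
  -- every missing face has cardinality at most d + 1
  have hmiss : ∀ ρ : Finset V, ρ ∉ X.faces → (∀ τ ⊂ ρ, τ ∈ X.faces) → ρ.card ≤ d + 1 := by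
    intro ρ h1 h2
    unfold AbstractSC.hdim at hd
    have hmem : ρ ∈ univ.powerset.filter fun σ : Finset V =>
        σ ∉ X.faces ∧ ∀ τ : Finset V, τ ⊂ σ → τ ∈ X.faces :=
      Finset.mem_filter.2 ⟨Finset.mem_powerset.2 (Finset.subset_univ ρ), h1, h2⟩
    have := Finset.le_sup (f := Finset.card) hmem
    omega
  -- symmetrization
  set dd : X.Face s → ℝ := fun σ => Real.sqrt (∏ v ∈ σ.1, ω v) with hddf
  have hp : ∀ σ : X.Face s, 0 < ∏ v ∈ σ.1, ω v := fun σ => Finset.prod_pos fun v _ => hω v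
  have hdd : ∀ σ, 0 < dd σ := fun σ => Real.sqrt_pos.2 (hp σ)
  have hdd2 : ∀ σ, dd σ ^ 2 = ∏ v ∈ σ.1, ω v := fun σ => Real.sq_sqrt (hp σ).le
  have hDDi : Matrix.diagonal dd * Matrix.diagonal (fun σ => (dd σ)⁻¹) = 1 := by
    rw [Matrix.diagonal_mul_diagonal]
    rw [show (fun σ => dd σ * (dd σ)⁻¹) = fun _ => (1:ℝ) from
      funext fun σ => mul_inv_cancel₀ (hdd σ).ne']
    exact Matrix.diagonal_one
  -- the key symmetry of the weighted Laplacian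
  have hkey : ∀ σ τ : X.Face s, (∏ v ∈ σ.1, ω v) * L σ τ = (∏ v ∈ τ.1, ω v) * L τ σ := by
    intro σ τ
    by_cases hστ : σ = τ
    · rw [hστ]
    have hτσ : ¬ (τ = σ) := fun h => hστ h.symm
    rw [hLdef]
    unfold lapFull
    rw [if_neg hστ, if_neg hτσ]
    by_cases hc : (σ.1 ∩ τ.1).card + 1 = s ∧ σ.1 ∪ τ.1 ∉ X.faces
    · have hc' : (τ.1 ∩ σ.1).card + 1 = s ∧ τ.1 ∪ σ.1 ∉ X.faces := by
        rwa [Finset.inter_comm, Finset.union_comm]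
      rw [if_pos hc, if_pos hc', epsSign_comm]
      have h1 : (∏ v ∈ σ.1, ω v) = (∏ v ∈ σ.1 \ τ.1, ω v) * ∏ v ∈ σ.1 ∩ τ.1, ω v := by
        rw [← Finset.prod_sdiff Finset.inter_subset_left, Finset.sdiff_inter_self_left]
      have h2 : (∏ v ∈ τ.1, ω v) = (∏ v ∈ τ.1 \ σ.1, ω v) * ∏ v ∈ σ.1 ∩ τ.1, ω v := by
        rw [← Finset.prod_sdiff Finset.inter_subset_left, Finset.sdiff_inter_self_left,
          Finset.inter_comm]
      rw [h1, h2]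
      ring
    · have hc' : ¬ ((τ.1 ∩ σ.1).card + 1 = s ∧ τ.1 ∪ σ.1 ∉ X.faces) := by
        rwa [Finset.inter_comm, Finset.union_comm]
      rw [if_neg hc, if_neg hc', mul_zero, mul_zero]
  -- the conjugated matrix is symmetric
  set W : Matrix (X.Face s) (X.Face s) ℝ :=
    Matrix.diagonal dd * L * Matrix.diagonal (fun σ => (dd σ)⁻¹) with hWdef
  have hWentry : ∀ σ τ, W σ τ = dd σ * L σ τ * (dd τ)⁻¹ := by
    intro σ τ
    rw [hWdef, Matrix.mul_diagonal, Matrix.diagonal_mul]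
  have hWherm : W.IsHermitian := by
    refine Matrix.ext fun σ τ => ?_
    rw [Matrix.conjTranspose_apply, star_trivial, hWentry, hWentry]
    have hk2 : (dd τ) ^ 2 * L τ σ = (dd σ) ^ 2 * L σ τ := by
      rw [hdd2, hdd2]; exact (hkey σ τ).symm
    field_simp
    rw [div_eq_div_iff (hdd σ).ne' (hdd τ).ne']
    linear_combination hk2
  -- the spectrum is the multiset of eigenvalues of W
  have hchar : L.charpoly = W.charpoly :=
    (my_charpoly_conj (Matrix.diagonal dd) (Matrix.diagonal (fun σ => (dd σ)⁻¹)) L hDDi).symm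
  have hroots : L.charpoly.roots = Multiset.map hWherm.eigenvalues univ.val := by
    rw [hchar]; exact my_roots_hermitian hWherm
  -- the smallest eigenvalue is a root of the characteristic polynomial
  have hlen : ((spec (lapZ X ω k)).sort (· ≤ ·)).length = Fintype.card (X.Face s) := by
    rw [Multiset.length_sort]
    rw [show spec (lapZ X ω k) = L.charpoly.roots from rfl, hroots, Multiset.card_map]
    simp [Finset.card_univ]
  have hlpos : 0 < ((spec (lapZ X ω k)).sort (· ≤ ·)).length := by
    rw [hlen]; exact Fintype.card_pos
  have hmem : eigAsc (lapZ X ω k) 1 ∈ L.charpoly.roots := by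
    rw [eigAsc, List.getD_eq_getElem _ _ (by simpa using hlpos)]
    exact (Multiset.mem_sort _).1 (List.getElem_mem _)
  -- Gershgorin
  have hev := my_eig_of_root L hmem
  obtain ⟨σ, hball⟩ := eigenvalue_mem_ball hev
  rw [Metric.mem_closedBall, Real.dist_eq] at hball
  have hballe := abs_le.1 hball
  -- the diagonal entry
  have hlink_disj : Disjoint σ.1 (X.link σ.1) := by
    rw [Finset.disjoint_left]
    intro a ha hal
    exact (Finset.mem_filter.1 hal).2.1 ha
  have hdiag : L σ σ = ∑ v ∈ σ.1 ∪ X.link σ.1, ω v := by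
    rw [hLdef]
    unfold lapFull
    rw [if_pos rfl, Finset.sum_union hlink_disj]
    ring
  -- off-diagonal bound
  have hRb := offdiag_bound X ω hω d s hmiss σ
  have hsd : ∑ v ∈ univ \ (σ.1 ∪ X.link σ.1), ω v =
      (∑ v, ω v) - ∑ v ∈ σ.1 ∪ X.link σ.1, ω v :=
    Finset.sum_sdiff_eq_sub (Finset.subset_univ _)
  -- minimality
  have hσmem : σ.1 ∈ X.facesOfCard s := Finset.mem_filter.2 ⟨σ.2.1, σ.2.2⟩
  have hmin : minOver (X.facesOfCard s) (fun ρ => ∑ v ∈ ρ ∪ X.link ρ, ω v) ≤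
      ∑ v ∈ σ.1 ∪ X.link σ.1, ω v := minOver_le' _ _ hσmem
  -- put everything together
  have hd1 : (0:ℝ) ≤ (d:ℝ) + 1 := by positivity
  have hmul := mul_le_mul_of_nonneg_left hmin hd1
  rw [hsd] at hRb
  rw [hdiag] at hballe
  linarith [hballe.1, hmul]
end
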